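/- arXiv:1505.01426 — 4 statements merged into one kernel-verified Lean document; each statement's English description precedes it below -/
import Mathlib

section
/- Let q ≥ 4 be an integer, let Π be a finite projective plane of order q, and let μ be an integer with 2 ≤ μ ≤ √q. Then Π contains a (1, μ)-saturating set of size at most 2·(μ+1)·√((q+1)·ln(q+1)) + 2. -/
open scoped Classical in
/-- The number of secants of a point set `S` through a point `Q`, counted with multiplicity:
the multiplicity of a line `ℓ` is `C(#(ℓ ∩ S), 2)`. -/
noncomputable def secantCount (L : Type*) {P : Type*} [Membership P L] [Fintype L]
    (S : Set P) (Q : P) : ℕ :=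
  ∑ ℓ : L, if Q ∈ ℓ then ({p ∈ S | p ∈ ℓ}.ncard).choose 2 else 0

/-- A point set `S` in a projective plane (with line type `L`) is *(1,μ)-saturating* if for
every point `Q` not in `S` the number of secants of `S` through `Q`, counted with
multiplicity, is at least `μ`. -/
def IsMuSaturating (L : Type*) {P : Type*} [Membership P L] [Fintype L]
    (S : Set P) (μ : ℕ) : Prop :=
  ∀ Q : P, Q ∉ S → μ ≤ secantCount L S Q

/-!
Take two lines `ℓ₁ ≠ ℓ₂`, `k`-sets `K₁ ⊆ ℓ₁ \ ℓ₂`, `K₂ ⊆ ℓ₂ \ ℓ₁` with `μ < k`, and `S = K₁ ∪ K₂`.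
A point of `ℓ₁ ∪ ℓ₂` lies on a line meeting `S` in more than `μ` points, which alone counts at
least `μ` times. A point `Q` off both lines lies on a secant through each `a ∈ K₁` whose central
projection from `Q` onto `ℓ₂` falls into `K₂`, so it suffices that `K₂` meets every projected set
`π_Q(K₁)` in at least `μ` points. A `k`-subset of the `q` points of `ℓ₂ \ ℓ₁` fails this for a
given `Q` only if it avoids `k + 1 - μ` points of `π_Q(K₁)`; a union bound over the `q² + q + 1`
points `Q` shows that a good `K₂` exists once `(q² + q + 1) C(k, μ - 1) C(q - k - 1 + μ, k)` is
less than `C(q, k)`. Since `C(q - s, k) ≤ C(q, k) e^{-sk/q}`, this holds for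
`k = ⌈(μ + 1) √((q + 1) ln (q + 1))⌉`, and trivially for `k = q` when that is larger.
-/

open Finset

namespace Nat

theorem descFactorial_mul_pow_le_descFactorial_mul_pow {n t : ℕ} (ht : t ≤ n) (k : ℕ) :
    t.descFactorial k * n ^ k ≤ n.descFactorial k * t ^ k := by
  induction k with
  | zero => simp
  | succ k ih =>
    have hstep : (t - k) * n ≤ (n - k) * t := by
      rw [Nat.sub_mul, Nat.sub_mul, Nat.mul_comm n t]
      exact Nat.sub_le_sub_left (Nat.mul_le_mul_left k ht) _
    calc t.descFactorial (k + 1) * n ^ (k + 1)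
        = ((t - k) * n) * (t.descFactorial k * n ^ k) := by
          rw [descFactorial_succ, pow_succ]; ring
      _ ≤ ((n - k) * t) * (n.descFactorial k * t ^ k) := Nat.mul_le_mul hstep ih
      _ = n.descFactorial (k + 1) * t ^ (k + 1) := by
          rw [descFactorial_succ, pow_succ]; ring

theorem choose_mul_pow_le_choose_mul_pow {n t : ℕ} (ht : t ≤ n) (k : ℕ) :
    t.choose k * n ^ k ≤ n.choose k * t ^ k := by
  have h := descFactorial_mul_pow_le_descFactorial_mul_pow ht k
  rw [descFactorial_eq_factorial_mul_choose, descFactorial_eq_factorial_mul_choose,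
    Nat.mul_assoc, Nat.mul_assoc] at h
  exact Nat.le_of_mul_le_mul_left h k.factorial_pos

end Nat

section Estimates

open Real

theorem choose_sub_le_choose_mul_exp {n s : ℕ} (hs : s ≤ n) (k : ℕ) :
    ((n - s).choose k : ℝ) ≤ n.choose k * exp (-(s * k / n)) := by
  rcases Nat.eq_zero_or_pos n with rfl | hn
  · simp
  have hn' : (0 : ℝ) < n := by exact_mod_cast hn
  have hratio : ((n - s).choose k : ℝ) * (n : ℝ) ^ k ≤ n.choose k * ((n - s : ℕ) : ℝ) ^ k := by
    exact_mod_cast Nat.choose_mul_pow_le_choose_mul_pow (Nat.sub_le n s) k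
  have hsub : ((n - s : ℕ) : ℝ) ≤ n * exp (-(s / n)) := by
    calc ((n - s : ℕ) : ℝ) = n * (-(s / n) + 1) := by
          rw [Nat.cast_sub hs]; field_simp; ring
      _ ≤ n * exp (-(s / n)) := by gcongr; exact add_one_le_exp _
  have hpow : ((n - s : ℕ) : ℝ) ^ k ≤ (n : ℝ) ^ k * exp (-(s * k / n)) := by
    calc ((n - s : ℕ) : ℝ) ^ k ≤ (n * exp (-(s / n))) ^ k := by gcongr
      _ = (n : ℝ) ^ k * exp (-(s * k / n)) := by
          rw [mul_pow, ← exp_nat_mul]; ring_nf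
  refine le_of_mul_le_mul_right ?_ (pow_pos hn' k)
  calc ((n - s).choose k : ℝ) * (n : ℝ) ^ k ≤ n.choose k * ((n - s : ℕ) : ℝ) ^ k := hratio
    _ ≤ n.choose k * ((n : ℝ) ^ k * exp (-(s * k / n))) := by gcongr
    _ = n.choose k * exp (-(s * k / n)) * (n : ℝ) ^ k := by ring

theorem one_le_log_add_one {q : ℕ} (hq : 2 ≤ q) : 1 ≤ log (q + 1) := by
  rw [le_log_iff_exp_le (by positivity)]
  have : (3 : ℝ) ≤ q + 1 := by norm_cast; omega
  linarith [exp_one_lt_d9]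

theorem add_one_mul_log_mul_le {q μ k : ℕ} (hq : 2 ≤ q) (hkq : k ≤ q)
    (hk : (μ + 1) * √((q + 1) * log (q + 1)) ≤ k) :
    (μ + 1) * log (q + 1) * q ≤ ((k : ℝ) + 1 - μ) * k := by
  have hΛ := one_le_log_add_one hq
  have hksq : (μ + 1) ^ 2 * ((q + 1) * log (q + 1)) ≤ (k : ℝ) ^ 2 := by
    calc (μ + 1) ^ 2 * ((q + 1) * log (q + 1))
        = ((μ + 1) * √((q + 1) * log (q + 1))) ^ 2 := by
          rw [mul_pow, sq_sqrt (by positivity)]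
      _ ≤ (k : ℝ) ^ 2 := by gcongr
  have hkq' : (k : ℝ) ≤ q := by exact_mod_cast hkq
  have hμ : (0 : ℝ) ≤ μ := μ.cast_nonneg
  nlinarith [mul_le_mul_of_nonneg_left hkq' hμ, mul_le_mul_of_nonneg_left hΛ
    (by positivity : (0 : ℝ) ≤ (μ + 1) * (μ * q + μ + 1))]

theorem mul_choose_mul_choose_lt_choose {q μ k : ℕ} (hq : 2 ≤ q) (hμ : 1 ≤ μ) (hμk : μ < k)
    (hkq : k ≤ q) (hk : (μ + 1) * √((q + 1) * log (q + 1)) ≤ k) :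
    (q ^ 2 + q + 1) * (k.choose (k + 1 - μ) * (q - (k + 1 - μ)).choose k) < q.choose k := by
  set s := k + 1 - μ
  have hs : (s : ℝ) = k + 1 - μ := by rw [Nat.cast_sub (by omega)]; push_cast; ring
  have hq' : (0 : ℝ) < q := by norm_cast; omega
  have hchoose : (k.choose s : ℝ) ≤ ((q : ℝ) + 1) ^ (μ - 1) := by
    rw [← Nat.choose_symm (by omega), show k - s = μ - 1 by omega]
    calc (k.choose (μ - 1) : ℝ) ≤ ((k ^ (μ - 1) : ℕ) : ℝ) := by
          exact_mod_cast Nat.choose_le_pow k (μ - 1)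
      _ ≤ ((q : ℝ) + 1) ^ (μ - 1) := by push_cast; gcongr; norm_cast; omega
  have hpoints : ((q : ℝ) ^ 2 + q + 1) * ((q : ℝ) + 1) ^ (μ - 1) < ((q : ℝ) + 1) ^ (μ + 1) := by
    rw [show μ + 1 = 2 + (μ - 1) by omega, pow_add]
    gcongr
    nlinarith
  have hexp : ((q : ℝ) + 1) ^ (μ + 1) ≤ exp (s * k / q) := by
    rw [← exp_log (by positivity : (0 : ℝ) < q + 1), ← exp_nat_mul, exp_le_exp,
      le_div_iff₀ hq', hs]
    push_cast
    exact add_one_mul_log_mul_le hq hkq hk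
  have hcast : ((q ^ 2 + q + 1) * (k.choose s * (q - s).choose k) : ℝ) < q.choose k :=
    calc ((q : ℝ) ^ 2 + q + 1) * (k.choose s * (q - s).choose k)
        ≤ ((q : ℝ) ^ 2 + q + 1) * (((q : ℝ) + 1) ^ (μ - 1)
            * (q.choose k * exp (-(s * k / q)))) := by
          gcongr
          exact choose_sub_le_choose_mul_exp (by omega) k
      _ < ((q : ℝ) + 1) ^ (μ + 1) * (q.choose k * exp (-(s * k / q))) := by
          rw [← mul_assoc]
          have : (0 : ℝ) < q.choose k := by exact_mod_cast Nat.choose_pos hkq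
          gcongr
      _ ≤ exp (s * k / q) * (q.choose k * exp (-(s * k / q))) := by gcongr
      _ = q.choose k := by rw [mul_left_comm, ← exp_add, add_neg_cancel, exp_zero, mul_one]
  exact_mod_cast hcast

end Estimates

section Counting

variable {α β : Type*} [DecidableEq α]

theorem card_filter_powersetCard_le_choose_mul_choose {B T : Finset α} (hTB : T ⊆ B) (k s : ℕ) :
    #{K ∈ B.powersetCard k | s ≤ #(T \ K)} ≤ (#T).choose s * (#B - s).choose k := by
  have hcover : {K ∈ B.powersetCard k | s ≤ #(T \ K)} ⊆
      (T.powersetCard s).biUnion fun U ↦ (B \ U).powersetCard k := by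
    intro K hK
    obtain ⟨hK, hs⟩ := mem_filter.mp hK
    obtain ⟨hKB, hKk⟩ := mem_powersetCard.mp hK
    obtain ⟨U, hUT, hUs⟩ := exists_subset_card_eq hs
    refine mem_biUnion.mpr ⟨U, mem_powersetCard.mpr ⟨hUT.trans sdiff_subset, hUs⟩, ?_⟩
    refine mem_powersetCard.mpr ⟨fun x hx ↦ mem_sdiff.mpr ⟨hKB hx, fun hxU ↦ ?_⟩, hKk⟩
    exact (mem_sdiff.mp (hUT hxU)).2 hx
  calc #{K ∈ B.powersetCard k | s ≤ #(T \ K)}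
      ≤ ∑ U ∈ T.powersetCard s, #((B \ U).powersetCard k) :=
        (card_le_card hcover).trans card_biUnion_le
    _ = ∑ _U ∈ T.powersetCard s, (#B - s).choose k := by
        refine sum_congr rfl fun U hU ↦ ?_
        obtain ⟨hUT, hUs⟩ := mem_powersetCard.mp hU
        rw [card_powersetCard, card_sdiff_of_subset (hUT.trans hTB), hUs]
    _ = (#T).choose s * (#B - s).choose k := by
        rw [sum_const, card_powersetCard, smul_eq_mul]

theorem exists_mem_forall_notMem_of_sum_card_lt {γ : Type*} [DecidableEq γ] {U : Finset γ}
    {I : Finset β} {bad : β → Finset γ} (h : ∑ i ∈ I, #(bad i) < #U) :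
    ∃ K ∈ U, ∀ i ∈ I, K ∉ bad i := by
  by_contra! hall
  have hcover : U ⊆ I.biUnion bad := fun K hK ↦ by
    obtain ⟨i, hi, hK⟩ := hall K hK
    exact mem_biUnion.mpr ⟨i, hi, hK⟩
  exact (card_le_card hcover |>.trans card_biUnion_le).not_gt h

theorem exists_subset_forall_le_card_inter {B : Finset α} {I : Finset β} {T : β → Finset α}
    {k μ : ℕ} (hT : ∀ i ∈ I, T i ⊆ B ∧ #(T i) = k)
    (hcount : #I * (k.choose (k + 1 - μ) * (#B - (k + 1 - μ)).choose k) < (#B).choose k) :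
    ∃ K ⊆ B, #K = k ∧ ∀ i ∈ I, μ ≤ #(T i ∩ K) := by
  have hbad : ∑ i ∈ I, #{K ∈ B.powersetCard k | k + 1 - μ ≤ #(T i \ K)}
      < #(B.powersetCard k) := by
    refine lt_of_le_of_lt ?_ (card_powersetCard k B ▸ hcount)
    rw [← smul_eq_mul, ← sum_const]
    refine sum_le_sum fun i hi ↦ ?_
    simpa only [(hT i hi).2] using card_filter_powersetCard_le_choose_mul_choose (hT i hi).1 k _
  obtain ⟨K, hK, hgood⟩ := exists_mem_forall_notMem_of_sum_card_lt hbad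
  obtain ⟨hKB, hKk⟩ := mem_powersetCard.mp hK
  refine ⟨K, hKB, hKk, fun i hi ↦ ?_⟩
  have hsplit := card_sdiff_add_card_inter (T i) K
  rw [(hT i hi).2] at hsplit
  have := hgood i hi
  simp only [mem_filter, hK, true_and, not_le] at this
  omega

end Counting

open scoped Classical

section Secants

variable {P L : Type*} [Membership P L] [Fintype L]

theorem sum_choose_two_le_secantCount (S : Finset P) {Q : P} {T : Finset L}
    (hT : ∀ ℓ ∈ T, Q ∈ ℓ) :
    ∑ ℓ ∈ T, (#{p ∈ S | p ∈ ℓ}).choose 2 ≤ secantCount L (S : Set P) Q := by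
  calc ∑ ℓ ∈ T, (#{p ∈ S | p ∈ ℓ}).choose 2
      = ∑ ℓ ∈ T, if Q ∈ ℓ then {p ∈ (S : Set P) | p ∈ ℓ}.ncard.choose 2 else 0 := by
        refine sum_congr rfl fun ℓ hℓ ↦ ?_
        rw [if_pos (hT ℓ hℓ), ← Set.ncard_coe_finset, coe_filter]; rfl
    _ ≤ secantCount L (S : Set P) Q := sum_le_sum_of_subset (subset_univ T)

theorem le_secantCount_of_subset_line {S K : Finset P} {ℓ : L} {Q : P} {μ : ℕ} (hKS : K ⊆ S)
    (hK : ∀ a ∈ K, a ∈ ℓ) (hQ : Q ∈ ℓ) (hμ : μ < #K) : μ ≤ secantCount L (S : Set P) Q :=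
  calc μ ≤ (μ + 1).choose 2 := by rw [Nat.choose_succ_succ', Nat.choose_one_right]; omega
    _ ≤ (#{p ∈ S | p ∈ ℓ}).choose 2 := by
        refine Nat.choose_le_choose 2 (hμ.trans_le (card_le_card fun a ha ↦ ?_))
        exact mem_filter.mpr ⟨hKS ha, hK a ha⟩
    _ = ∑ m ∈ {ℓ}, (#{p ∈ S | p ∈ m}).choose 2 := (sum_singleton _ _).symm
    _ ≤ secantCount L (S : Set P) Q :=
        sum_choose_two_le_secantCount S fun m hm ↦ mem_singleton.mp hm ▸ hQ

theorem card_le_secantCount {S : Finset P} {T : Finset L} {Q : P}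
    (hT : ∀ ℓ ∈ T, Q ∈ ℓ ∧ 1 < #{p ∈ S | p ∈ ℓ}) : #T ≤ secantCount L (S : Set P) Q :=
  calc #T = ∑ _ℓ ∈ T, 1 := card_eq_sum_ones T
    _ ≤ ∑ ℓ ∈ T, (#{p ∈ S | p ∈ ℓ}).choose 2 :=
        sum_le_sum fun ℓ hℓ ↦ Nat.choose_pos (hT ℓ hℓ).2
    _ ≤ secantCount L (S : Set P) Q := sum_choose_two_le_secantCount S fun ℓ hℓ ↦ (hT ℓ hℓ).1

end Secants

section CentralProjection

open Configuration Nondegenerate HasLines HasPoints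

variable {P L : Type*} [Membership P L]

def IsCentralProjection (Q : P) (ℓ : L) (π : P → P) (m : P → L) : Prop :=
  ∀ a ≠ Q, Q ∈ m a ∧ a ∈ m a ∧ π a ∈ m a ∧ π a ∈ ℓ

theorem exists_isCentralProjection [ProjectivePlane P L] (ℓ : L) :
    ∃ (π : P → P → P) (m : P → P → L), ∀ Q, Q ∉ ℓ → IsCentralProjection Q ℓ (π Q) (m Q) := by
  have h : ∀ Q a : P, ∃ (b : P) (m : L), Q ∉ ℓ → a ≠ Q → Q ∈ m ∧ a ∈ m ∧ b ∈ m ∧ b ∈ ℓ := by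
    intro Q a
    by_cases haQ : a = Q
    · exact ⟨Q, ℓ, fun _ h ↦ absurd haQ h⟩
    have hm := mkLine_ax (L := L) (Ne.symm haQ)
    by_cases hQ : Q ∈ ℓ
    · exact ⟨Q, ℓ, fun h ↦ absurd hQ h⟩
    have hmℓ : mkLine (L := L) (Ne.symm haQ) ≠ ℓ := fun h ↦ hQ (h ▸ hm.1)
    exact ⟨mkPoint hmℓ, _, fun _ _ ↦ ⟨hm.1, hm.2, mkPoint_ax hmℓ⟩⟩
  choose π m hπ using h
  exact ⟨π, m, fun Q hQ a ha ↦ hπ Q a hQ ha⟩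

namespace IsCentralProjection

variable [Nondegenerate P L] {Q : P} {ℓ₁ ℓ₂ : L} {π : P → P} {m : P → L}

theorem injOn_line (h : IsCentralProjection Q ℓ₂ π m) (hQ : Q ∉ ℓ₁) :
    Set.InjOn m {a | a ∈ ℓ₁} := by
  intro a ha a' ha' hm
  have h₁ := h a (ne_of_mem_of_not_mem ha hQ)
  have h₂ := h a' (ne_of_mem_of_not_mem ha' hQ)
  exact (eq_or_eq h₁.2.1 (hm ▸ h₂.2.1) ha ha').resolve_right fun h ↦ hQ (h ▸ h₁.1)

theorem injOn (h : IsCentralProjection Q ℓ₂ π m) (hQ₁ : Q ∉ ℓ₁) (hQ₂ : Q ∉ ℓ₂) :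
    Set.InjOn π {a | a ∈ ℓ₁} := by
  intro a ha a' ha' hπ
  have h₁ := h a (ne_of_mem_of_not_mem ha hQ₁)
  have h₂ := h a' (ne_of_mem_of_not_mem ha' hQ₁)
  refine h.injOn_line hQ₁ ha ha' ?_
  exact (eq_or_eq h₁.1 h₁.2.2.1 h₂.1 (hπ ▸ h₂.2.2.1)).resolve_left
    (ne_of_mem_of_not_mem h₁.2.2.2 hQ₂).symm

theorem mem_and_notMem (h : IsCentralProjection Q ℓ₂ π m) (hQ : Q ∉ ℓ₁) {a : P}
    (ha₁ : a ∈ ℓ₁) (ha₂ : a ∉ ℓ₂) : π a ∈ ℓ₂ ∧ π a ∉ ℓ₁ := by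
  have ha := h a (ne_of_mem_of_not_mem ha₁ hQ)
  refine ⟨ha.2.2.2, fun hπa ↦ ?_⟩
  rcases eq_or_eq ha.2.1 ha.2.2.1 ha₁ hπa with heq | heq
  · exact ha₂ (heq ▸ ha.2.2.2)
  · exact hQ (heq ▸ ha.1)

variable [Fintype L]

theorem card_image_inter_le_secantCount (h : IsCentralProjection Q ℓ₂ π m) (hQ : Q ∉ ℓ₁)
    {K₁ : Finset P} (hK₁ : ∀ a ∈ K₁, a ∈ ℓ₁ ∧ a ∉ ℓ₂) (K₂ : Finset P) :
    #(K₁.image π ∩ K₂) ≤ secantCount L (↑(K₁ ∪ K₂) : Set P) Q := by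
  set M := {a ∈ K₁ | π a ∈ K₂}
  have hinj : Set.InjOn m M := (h.injOn_line hQ).mono fun a ha ↦ (hK₁ a (mem_filter.mp ha).1).1
  calc #(K₁.image π ∩ K₂) = #(M.image π) := by rw [← filter_mem_eq_inter, filter_image]
    _ ≤ #M := card_image_le
    _ = #(M.image m) := (card_image_of_injOn hinj).symm
    _ ≤ secantCount L (↑(K₁ ∪ K₂) : Set P) Q := by
        refine card_le_secantCount fun ℓ hℓ ↦ ?_
        obtain ⟨a, ha, rfl⟩ := mem_image.mp hℓ
        obtain ⟨haK₁, hπa⟩ := mem_filter.mp ha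
        obtain ⟨hQm, ham, hπm, hπℓ₂⟩ := h a (ne_of_mem_of_not_mem (hK₁ a haK₁).1 hQ)
        refine ⟨hQm, one_lt_card.mpr ⟨a, ?_, π a, ?_, fun he ↦ (hK₁ a haK₁).2 (he ▸ hπℓ₂)⟩⟩
        · exact mem_filter.mpr ⟨mem_union_left _ haK₁, ham⟩
        · exact mem_filter.mpr ⟨mem_union_right _ hπa, hπm⟩

end IsCentralProjection

end CentralProjection

section Construction

open Configuration ProjectivePlane

variable {P L : Type*} [Membership P L] [Fintype L]

theorem isMuSaturating_union [Nondegenerate P L] {ℓ₁ ℓ₂ : L} {K₁ K₂ : Finset P} {μ : ℕ}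
    {π : P → P → P} {m : P → P → L} (hπ : ∀ Q, Q ∉ ℓ₂ → IsCentralProjection Q ℓ₂ (π Q) (m Q))
    (hK₁ : ∀ a ∈ K₁, a ∈ ℓ₁ ∧ a ∉ ℓ₂) (hK₂ : ∀ b ∈ K₂, b ∈ ℓ₂) (h₁ : μ < #K₁) (h₂ : μ < #K₂)
    (hmeet : ∀ Q, Q ∉ ℓ₁ → Q ∉ ℓ₂ → μ ≤ #(K₁.image (π Q) ∩ K₂)) :
    IsMuSaturating L (↑(K₁ ∪ K₂) : Set P) μ := by
  intro Q _
  by_cases hQ₁ : Q ∈ ℓ₁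
  · exact le_secantCount_of_subset_line subset_union_left (fun a ha ↦ (hK₁ a ha).1) hQ₁ h₁
  by_cases hQ₂ : Q ∈ ℓ₂
  · exact le_secantCount_of_subset_line subset_union_right hK₂ hQ₂ h₂
  exact (hmeet Q hQ₁ hQ₂).trans ((hπ Q hQ₂).card_image_inter_le_secantCount hQ₁ hK₁ K₂)

variable [Fintype P] [ProjectivePlane P L]

theorem card_filter_mem_and_notMem {ℓ₁ ℓ₂ : L} (hne : ℓ₁ ≠ ℓ₂) :
    #{p : P | p ∈ ℓ₁ ∧ p ∉ ℓ₂} = order P L := by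
  have hline : #{p : P | p ∈ ℓ₁} = order P L + 1 := by
    rw [← pointCount_eq P ℓ₁, pointCount, Nat.card_eq_fintype_card, Fintype.card_subtype]
  have hmeet : #{p : P | p ∈ ℓ₁ ∧ p ∈ ℓ₂} = 1 := by
    obtain ⟨p, hp, huniq⟩ := HasPoints.existsUnique_point P L ℓ₁ ℓ₂ hne
    exact card_eq_one.mpr ⟨p, by ext x; simpa using ⟨huniq x, fun h ↦ h ▸ hp⟩⟩
  have hsplit := card_filter_add_card_filter_not (s := {p : P | p ∈ ℓ₁}) (· ∈ ℓ₂)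
  simp only [filter_filter] at hsplit
  omega

theorem exists_isMuSaturating_card_le {q μ k : ℕ} (horder : order P L = q) (hμk : μ < k)
    (hkq : k ≤ q)
    (hcount : (q ^ 2 + q + 1) * (k.choose (k + 1 - μ) * (q - (k + 1 - μ)).choose k)
      < q.choose k) :
    ∃ S : Finset P, IsMuSaturating L (↑S : Set P) μ ∧ #S ≤ 2 * k := by
  obtain ⟨-, p, -, ℓ₁, ℓ₂, -, -, -, hp₁, hp₂, -⟩ := exists_config (P := P) (L := L)
  have hne : ℓ₁ ≠ ℓ₂ := fun h ↦ hp₁ (h ▸ hp₂)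
  set A : Finset P := {p | p ∈ ℓ₁ ∧ p ∉ ℓ₂}
  set B : Finset P := {p | p ∈ ℓ₂ ∧ p ∉ ℓ₁}
  have hA : #A = q := horder ▸ card_filter_mem_and_notMem hne
  have hB : #B = q := horder ▸ card_filter_mem_and_notMem hne.symm
  obtain ⟨K₁, hK₁A, hK₁⟩ := exists_subset_card_eq (hkq.trans hA.ge)
  have hK₁ℓ : ∀ a ∈ K₁, a ∈ ℓ₁ ∧ a ∉ ℓ₂ := fun a ha ↦ (mem_filter.mp (hK₁A ha)).2
  obtain ⟨π, m, hπ⟩ := exists_isCentralProjection (P := P) ℓ₂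
  set I : Finset P := {Q | Q ∉ ℓ₁ ∧ Q ∉ ℓ₂}
  have hI : #I ≤ q ^ 2 + q + 1 := horder ▸ card_points P L ▸ card_le_univ I
  have hT : ∀ Q ∈ I, K₁.image (π Q) ⊆ B ∧ #(K₁.image (π Q)) = k := by
    intro Q hQ
    obtain ⟨hQ₁, hQ₂⟩ := (mem_filter.mp hQ).2
    refine ⟨fun b hb ↦ ?_, ?_⟩
    · obtain ⟨a, ha, rfl⟩ := mem_image.mp hb
      exact mem_filter.mpr ⟨mem_univ _, (hπ Q hQ₂).mem_and_notMem hQ₁ (hK₁ℓ a ha).1 (hK₁ℓ a ha).2⟩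
    · rw [card_image_of_injOn (((hπ Q hQ₂).injOn hQ₁ hQ₂).mono fun a ha ↦ (hK₁ℓ a ha).1), hK₁]
  obtain ⟨K₂, hK₂B, hK₂, hmeet⟩ := exists_subset_forall_le_card_inter hT
    (by rw [hB]; exact (Nat.mul_le_mul_right _ hI).trans_lt hcount)
  refine ⟨K₁ ∪ K₂, isMuSaturating_union hπ hK₁ℓ (fun b hb ↦ (mem_filter.mp (hK₂B hb)).2.1)
    (hK₁ ▸ hμk) (hK₂ ▸ hμk) fun Q hQ₁ hQ₂ ↦ hmeet Q (mem_filter.mpr ⟨mem_univ _, hQ₁, hQ₂⟩), ?_⟩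
  calc #(K₁ ∪ K₂) ≤ #K₁ + #K₂ := card_union_le _ _
    _ = 2 * k := by omega

end Construction

theorem mu_saturating_bound_mu_le_sqrt_q (q : ℕ) (hq : 4 ≤ q)
    (P L : Type*) [Fintype P] [Fintype L] [Membership P L]
    [Configuration.ProjectivePlane P L]
    (horder : Configuration.ProjectivePlane.order P L = q)
    (μ : ℕ) (hμ₁ : 2 ≤ μ) (hμ₂ : (μ : ℝ) ≤ Real.sqrt q) :
    ∃ S : Finset P, IsMuSaturating L (↑S : Set P) μ ∧
      (S.card : ℝ) ≤ 2 * ((μ : ℝ) + 1) * Real.sqrt ((q + 1) * Real.log (q + 1)) + 2 := by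
  set x := ((μ : ℝ) + 1) * Real.sqrt ((q + 1) * Real.log (q + 1))
  have hμq : μ < q := by
    have hq₁ : (1 : ℝ) < q := by norm_cast; omega
    exact_mod_cast hμ₂.trans_lt (Real.sqrt_lt_self_iff.mpr hq₁)
  have hμx : (μ : ℝ) + 1 ≤ x := by
    refine le_mul_of_one_le_right (by positivity) (Real.one_le_sqrt.mpr ?_)
    exact one_le_mul_of_one_le_of_one_le (by norm_cast; omega) (one_le_log_add_one (by omega))
  obtain ⟨k, hμk, hkq, hcount, hkx⟩ : ∃ k, μ < k ∧ k ≤ q ∧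
      (q ^ 2 + q + 1) * (k.choose (k + 1 - μ) * (q - (k + 1 - μ)).choose k) < q.choose k ∧
      (k : ℝ) ≤ x + 1 := by
    by_cases hxq : ⌈x⌉₊ ≤ q
    · have hμx' : μ < ⌈x⌉₊ := by
        exact_mod_cast (lt_add_one (μ : ℝ)).trans_le (hμx.trans (Nat.le_ceil x))
      exact ⟨⌈x⌉₊, hμx', hxq, mul_choose_mul_choose_lt_choose (by omega) (by omega) hμx' hxq
        (Nat.le_ceil x), (Nat.ceil_lt_add_one (by positivity)).le⟩
    · refine ⟨q, hμq, le_rfl, ?_, ?_⟩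
      · rw [Nat.choose_eq_zero_of_lt (by omega : q - (q + 1 - μ) < q), Nat.choose_self]
        simp
      · exact (Nat.cast_le.mpr (not_le.mp hxq).le).trans (Nat.ceil_lt_add_one (by positivity)).le
  obtain ⟨S, hS, hcard⟩ := exists_isMuSaturating_card_le horder hμk hkq hcount
  refine ⟨S, hS, ?_⟩
  have : (#S : ℝ) ≤ 2 * k := by exact_mod_cast hcard
  linarith
end

section
/- Let q ≥ 2 and w ≥ 1 be integers, let Π be a finite projective plane of order q, and fix a point A of Π. Then the number of (w+1)-element point subsets K of Π with A ∉ K such that the sum over all lines ℓ through A of the binomial coefficient C(#(ℓ ∩ K), 2) equals exactly 1 is (q+1)·C(q,2)·q^(w−1)·C(q, w−1), where C(n, k) denotes the binomial coefficient. -/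
private lemma choose_two_eq_one_iff {n : ℕ} : n.choose 2 = 1 ↔ n = 2 := by
  constructor
  · intro h
    rcases lt_or_ge n 2 with h2 | h2
    · rw [Nat.choose_eq_zero_iff.mpr h2] at h; omega
    rcases lt_or_ge n 3 with h3 | h3
    · omega
    · have h4 : Nat.choose 3 2 ≤ n.choose 2 := Nat.choose_le_choose 2 h3
      have h5 : Nat.choose 3 2 = 3 := by decide
      omega
  · rintro rfl; rfl

private lemma sum_choose_two_eq_one_iff {ι : Type*} [Fintype ι] (n : ι → ℕ) :
    ∑ i, (n i).choose 2 = 1 ↔ ∃ i₀, n i₀ = 2 ∧ ∀ i, i ≠ i₀ → n i ≤ 1 := by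
  classical
  constructor
  · intro h
    have hex : ∃ i₀, (n i₀).choose 2 ≠ 0 := by
      by_contra hc
      push_neg at hc
      rw [Finset.sum_eq_zero (fun i _ => hc i)] at h
      omega
    obtain ⟨i₀, hi₀⟩ := hex
    have hsum : (n i₀).choose 2 + ∑ i ∈ Finset.univ.erase i₀, (n i).choose 2
        = ∑ i : ι, (n i).choose 2 :=
      Finset.add_sum_erase Finset.univ (fun i => (n i).choose 2) (Finset.mem_univ i₀)
    rw [h] at hsum
    have h1 : (n i₀).choose 2 = 1 := by omega
    have h0 : ∑ i ∈ Finset.univ.erase i₀, (n i).choose 2 = 0 := by omega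
    refine ⟨i₀, choose_two_eq_one_iff.mp h1, fun i hi => ?_⟩
    have hz := Finset.sum_eq_zero_iff.mp h0 i (Finset.mem_erase.mpr ⟨hi, Finset.mem_univ i⟩)
    have := Nat.choose_eq_zero_iff.mp hz
    omega
  · rintro ⟨i₀, h2, hle⟩
    have hsum : (n i₀).choose 2 + ∑ i ∈ Finset.univ.erase i₀, (n i).choose 2
        = ∑ i : ι, (n i).choose 2 :=
      Finset.add_sum_erase Finset.univ (fun i => (n i).choose 2) (Finset.mem_univ i₀)
    have h0 : ∑ i ∈ Finset.univ.erase i₀, (n i).choose 2 = 0 :=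
      Finset.sum_eq_zero fun i hi => Nat.choose_eq_zero_iff.mpr (by
        have := hle i (Finset.mem_erase.mp hi).1; omega)
    rw [h2, h0] at hsum
    rw [← hsum]
    decide

theorem card_subsets_covering_exactly_once (q w : ℕ) (hq : 2 ≤ q) (hw : 1 ≤ w)
    (P L : Type*) [Fintype P] [Fintype L] [Membership P L]
    [Configuration.ProjectivePlane P L]
    (horder : Configuration.ProjectivePlane.order P L = q) (A : P) :
    Nat.card {K : Finset P // K.card = w + 1 ∧ A ∉ K ∧ secantCount L (↑K : Set P) A = 1} =
      (q + 1) * q.choose 2 * q ^ (w - 1) * q.choose (w - 1) := by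
  classical
  -- the lines through `A`
  have hIcard : Fintype.card {ℓ : L // A ∈ ℓ} = q + 1 := by
    have h := Configuration.ProjectivePlane.lineCount_eq L A
    rw [horder] at h
    rwa [Configuration.lineCount, Nat.card_eq_fintype_card] at h
  haveI hIne : Nonempty {ℓ : L // A ∈ ℓ} := by
    rw [← Fintype.card_pos_iff, hIcard]; omega
  -- the map sending `p ≠ A` to the line through `A` and `p`
  set f : P → {ℓ : L // A ∈ ℓ} := fun p =>
    if h : p = A then Classical.arbitrary _
    else ⟨(Configuration.HasLines.existsUnique_line P L A p (Ne.symm h)).choose,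
      (Configuration.HasLines.existsUnique_line P L A p (Ne.symm h)).choose_spec.1.1⟩ with hf
  have hfmem : ∀ (p : P), p ≠ A → p ∈ (f p).1 := by
    intro p hp
    simp only [hf, dif_neg hp]
    exact (Configuration.HasLines.existsUnique_line P L A p (Ne.symm hp)).choose_spec.1.2
  have huniq : ∀ (p : P), p ≠ A → ∀ i : {ℓ : L // A ∈ ℓ}, p ∈ i.1 → f p = i := by
    intro p hp i hpi
    have h := (Configuration.HasLines.existsUnique_line P L A p (Ne.symm hp)).choose_spec.2
      i.1 ⟨i.2, hpi⟩
    simp only [hf, dif_neg hp]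
    exact Subtype.ext h.symm
  -- the affine parts of the lines through `A`
  set B : {ℓ : L // A ∈ ℓ} → Finset P :=
    fun i => Finset.univ.filter (fun p => p ∈ i.1 ∧ p ≠ A) with hB
  have hBmem : ∀ i p, p ∈ B i ↔ (p ∈ i.1 ∧ p ≠ A) := by
    intro i p; simp [hB]
  have hfB : ∀ (i) (p : P), p ∈ B i → f p = i := by
    intro i p hp
    rw [hBmem] at hp
    exact huniq p hp.2 i hp.1
  have hBf : ∀ (p : P), p ≠ A → p ∈ B (f p) := fun p hp => (hBmem _ _).mpr ⟨hfmem p hp, hp⟩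
  have hBA : ∀ i, A ∉ B i := by
    intro i hAi
    exact ((hBmem i A).mp hAi).2 rfl
  have hBcard : ∀ i, (B i).card = q := by
    intro i
    have hpc : (Finset.univ.filter (fun p => p ∈ i.1)).card = q + 1 := by
      have h := Configuration.ProjectivePlane.pointCount_eq P i.1
      rw [horder] at h
      rwa [Configuration.pointCount, Nat.card_eq_fintype_card, Fintype.card_subtype] at h
    have hBeq : B i = (Finset.univ.filter (fun p => p ∈ i.1)).erase A := by
      ext p
      simp only [hBmem, Finset.mem_erase, Finset.mem_filter, Finset.mem_univ, true_and]
      tauto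
    rw [hBeq, Finset.card_erase_of_mem (by simp [i.2]), hpc]
    omega
  have htrans : ∀ T : Finset {ℓ : L // A ∈ ℓ},
      (Finset.univ.filter (fun R : Finset P =>
        (∀ p ∈ R, p ∈ B (f p)) ∧ (∀ i, (R.filter (fun p => f p = i)).card ≤ 1) ∧
          R.image f = T)).card
      = ∏ i ∈ T, (B i).card := by
    intro T
    rw [← Finset.card_pi]
    refine (Finset.card_bij (fun g _ => T.attach.image (fun x => g x.1 x.2)) ?_ ?_ ?_).symm
    · -- maps into the filter set
      intro g hg
      rw [Finset.mem_pi] at hg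
      have hmem : ∀ p, p ∈ T.attach.image (fun x => g x.1 x.2) ↔
          ∃ x : {x // x ∈ T}, g x.1 x.2 = p := by
        intro p; simp [Finset.mem_image]
      have hfval : ∀ (x : {x // x ∈ T}), f (g x.1 x.2) = x.1 := fun x => hfB x.1 _ (hg x.1 x.2)
      simp only [Finset.mem_filter, Finset.mem_univ, true_and]
      refine ⟨?_, ?_, ?_⟩
      · intro p hp
        obtain ⟨x, rfl⟩ := (hmem p).mp hp
        rw [hfval x]; exact hg x.1 x.2
      · intro i
        rw [Finset.card_le_one]
        intro a ha b hb
        simp only [Finset.mem_filter] at ha hb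
        obtain ⟨x, rfl⟩ := (hmem a).mp ha.1
        obtain ⟨y, rfl⟩ := (hmem b).mp hb.1
        have hxy : x = y := Subtype.ext (by rw [← hfval x, ← hfval y, ha.2, hb.2])
        rw [hxy]
      · apply Finset.Subset.antisymm
        · intro i hi
          rw [Finset.mem_image] at hi
          obtain ⟨p, hp, rfl⟩ := hi
          obtain ⟨x, rfl⟩ := (hmem p).mp hp
          rw [hfval x]; exact x.2
        · intro i hi
          rw [Finset.mem_image]
          exact ⟨g i hi, (hmem _).mpr ⟨⟨i, hi⟩, rfl⟩, hfval ⟨i, hi⟩⟩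
    · -- injectivity
      intro g₁ hg₁ g₂ hg₂ heq
      rw [Finset.mem_pi] at hg₁ hg₂
      have heq' : T.attach.image (fun x => g₁ x.1 x.2) = T.attach.image (fun x => g₂ x.1 x.2) := heq
      funext i hi
      have h1mem : g₁ i hi ∈ T.attach.image (fun x => g₂ x.1 x.2) := by
        rw [← heq']
        exact Finset.mem_image.mpr ⟨⟨i, hi⟩, Finset.mem_attach _ _, rfl⟩
      obtain ⟨x, _, hx⟩ := Finset.mem_image.mp h1mem
      have e1 : f (g₂ x.1 x.2) = x.1 := hfB _ _ (hg₂ x.1 x.2)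
      have e2 : f (g₁ i hi) = i := hfB _ _ (hg₁ i hi)
      have hxi : x = (⟨i, hi⟩ : {x // x ∈ T}) := by
        apply Subtype.ext
        rw [← e1, hx, e2]
      rw [hxi] at hx
      exact hx.symm
    · -- surjectivity
      intro R hR
      simp only [Finset.mem_filter, Finset.mem_univ, true_and] at hR
      obtain ⟨hall, hone, himg⟩ := hR
      have hInj : ∀ p ∈ R, ∀ p' ∈ R, f p = f p' → p = p' := by
        intro p hp p' hp' hpp
        exact Finset.card_le_one.mp (hone (f p)) p (Finset.mem_filter.mpr ⟨hp, rfl⟩) p'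
          (Finset.mem_filter.mpr ⟨hp', hpp.symm⟩)
      have hexists : ∀ i ∈ T, ∃ p, p ∈ R ∧ f p = i := by
        intro i hi
        rw [← himg] at hi
        obtain ⟨p, hp, hfp⟩ := Finset.mem_image.mp hi
        exact ⟨p, hp, hfp⟩
      choose g hg1 hg2 using hexists
      have hgpi : g ∈ T.pi (fun i => B i) := by
        rw [Finset.mem_pi]
        intro i hi
        have := hall _ (hg1 i hi)
        rwa [hg2 i hi] at this
      refine ⟨g, hgpi, ?_⟩
      apply Finset.Subset.antisymm
      · intro p hp
        obtain ⟨x, _, rfl⟩ := Finset.mem_image.mp hp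
        exact hg1 x.1 x.2
      · intro p hp
        have hfp : f p ∈ T := himg ▸ Finset.mem_image_of_mem f hp
        have hgp : g (f p) hfp = p := hInj _ (hg1 _ hfp) _ hp (hg2 _ hfp)
        rw [Finset.mem_image]
        exact ⟨⟨f p, hfp⟩, Finset.mem_attach _ _, hgp⟩
  -- rewriting the secant count as a sum over lines through `A`
  have hsec : ∀ K : Finset P, A ∉ K →
      secantCount L (↑K : Set P) A
        = ∑ i : {ℓ : L // A ∈ ℓ}, ((K.filter (fun p => f p = i)).card).choose 2 := by
    intro K hA
    simp only [secantCount]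
    rw [← Finset.sum_filter]
    have hsub : ∑ ℓ ∈ Finset.univ.filter (fun ℓ : L => A ∈ ℓ),
          ({p ∈ (↑K : Set P) | p ∈ ℓ}.ncard).choose 2
        = ∑ i : {ℓ : L // A ∈ ℓ}, ({p ∈ (↑K : Set P) | p ∈ (i : L)}.ncard).choose 2 :=
      Finset.sum_subtype _ (fun ℓ => by simp) _
    rw [hsub]
    apply Finset.sum_congr rfl
    intro i _
    have hset : {p ∈ (↑K : Set P) | p ∈ (i : L)} = ↑(K.filter (fun p => p ∈ (i : L))) := by
      ext p; simp
    rw [hset, Set.ncard_coe_finset]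
    congr 2
    apply Finset.filter_congr
    intro p hp
    have hpA : p ≠ A := fun h => hA (h ▸ hp)
    constructor
    · intro hpi
      exact huniq p hpA i hpi
    · intro hfi
      rw [← hfi]
      exact hfmem p hpA
  -- the per-line pieces
  set Gi : {ℓ : L // A ∈ ℓ} → Finset (Finset P) := fun i₀ =>
    Finset.univ.filter (fun K : Finset P =>
      K.card = w + 1 ∧ A ∉ K ∧ (K.filter (fun p => f p = i₀)).card = 2 ∧
        ∀ i, i ≠ i₀ → (K.filter (fun p => f p = i)).card ≤ 1) with hGi
  have hcard : Nat.card {K : Finset P //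
      K.card = w + 1 ∧ A ∉ K ∧ secantCount L (↑K : Set P) A = 1}
      = (Finset.univ.filter (fun K : Finset P =>
          K.card = w + 1 ∧ A ∉ K ∧ secantCount L (↑K : Set P) A = 1)).card := by
    rw [Nat.card_eq_fintype_card, Fintype.card_subtype]
  rw [hcard]
  have hGood : Finset.univ.filter (fun K : Finset P =>
      K.card = w + 1 ∧ A ∉ K ∧ secantCount L (↑K : Set P) A = 1)
      = Finset.univ.biUnion Gi := by
    ext K
    simp only [hGi, Finset.mem_filter, Finset.mem_univ, true_and, Finset.mem_biUnion]
    constructor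
    · rintro ⟨h1, h2, h3⟩
      rw [hsec K h2, sum_choose_two_eq_one_iff] at h3
      obtain ⟨i₀, hi⟩ := h3
      exact ⟨i₀, h1, h2, hi.1, hi.2⟩
    · rintro ⟨i₀, h1, h2, h3, h4⟩
      exact ⟨h1, h2, by rw [hsec K h2, sum_choose_two_eq_one_iff]; exact ⟨i₀, h3, h4⟩⟩
  have hdisjoint : ∀ x ∈ (Finset.univ : Finset {ℓ : L // A ∈ ℓ}), ∀ y ∈ Finset.univ,
      x ≠ y → Disjoint (Gi x) (Gi y) := by
    intro x _ y _ hxy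
    rw [Finset.disjoint_left]
    intro K hKx hKy
    simp only [hGi, Finset.mem_filter, Finset.mem_univ, true_and] at hKx hKy
    have h1 := hKx.2.2.1
    have h2 := hKy.2.2.2 x hxy
    omega
  rw [hGood, Finset.card_biUnion hdisjoint]
  -- the count for each fixed line through `A`
  have hper : ∀ i₀ : {ℓ : L // A ∈ ℓ},
      (Gi i₀).card = q.choose 2 * (q.choose (w - 1) * q ^ (w - 1)) := by
    intro i₀
    set Sg : Finset (Finset P) := Finset.univ.filter (fun R : Finset P =>
      (∀ p ∈ R, p ∈ B (f p)) ∧ (∀ i, (R.filter (fun p => f p = i)).card ≤ 1) ∧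
        (∀ p ∈ R, f p ≠ i₀) ∧ R.card = w - 1) with hSg
    have hinjSg : ∀ R : Finset P, (∀ i, (R.filter (fun p => f p = i)).card ≤ 1) →
        ∀ p ∈ R, ∀ p' ∈ R, f p = f p' → p = p' := by
      intro R hone p hp p' hp' hpp
      exact Finset.card_le_one.mp (hone (f p)) p (Finset.mem_filter.mpr ⟨hp, rfl⟩) p'
        (Finset.mem_filter.mpr ⟨hp', hpp.symm⟩)
    -- split a good set into its 2-point part and its 1-point part
    have step1 : (Gi i₀).card = ((B i₀).powersetCard 2 ×ˢ Sg).card := by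
      refine Finset.card_bij'
        (fun K _ => (K.filter (fun p => f p = i₀), K.filter (fun p => ¬ f p = i₀)))
        (fun pr _ => pr.1 ∪ pr.2) ?_ ?_ ?_ ?_
      · -- forward map lands in the product
        intro K hK
        simp only [hGi, Finset.mem_filter, Finset.mem_univ, true_and] at hK
        obtain ⟨hc, hA, h2, hle⟩ := hK
        rw [Finset.mem_product]
        constructor
        · rw [Finset.mem_powersetCard]
          refine ⟨?_, h2⟩
          intro p hp
          rw [Finset.mem_filter] at hp
          have hpA : p ≠ A := fun h => hA (h ▸ hp.1)
          have := hBf p hpA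
          rw [hp.2] at this
          exact this
        · simp only [hSg, Finset.mem_filter, Finset.mem_univ, true_and]
          refine ⟨?_, ?_, ?_, ?_⟩
          · intro p hp
            exact hBf p (fun h => hA (h ▸ hp.1))
          · intro i
            by_cases hi : i = i₀
            · subst hi
              have he : (K.filter (fun p => ¬ f p = i)).filter (fun p => f p = i) = ∅ := by
                ext p; simp only [Finset.mem_filter, Finset.notMem_empty, iff_false]
                tauto
              rw [he]; simp
            · calc ((K.filter (fun p => ¬ f p = i₀)).filter (fun p => f p = i)).card
                  ≤ (K.filter (fun p => f p = i)).card := by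
                    apply Finset.card_le_card
                    intro p hp
                    simp only [Finset.mem_filter] at hp ⊢
                    exact ⟨hp.1.1, hp.2⟩
                _ ≤ 1 := hle i hi
          · intro p hp
            exact hp.2
          · have := Finset.card_filter_add_card_filter_not
              (s := K) (fun p => f p = i₀)
            omega
      · -- backward map lands in `Gi i₀`
        rintro ⟨Pr, R⟩ hpr
        dsimp only
        rw [Finset.mem_product] at hpr
        obtain ⟨hPr, hR⟩ := hpr
        rw [Finset.mem_powersetCard] at hPr
        simp only [hSg, Finset.mem_filter, Finset.mem_univ, true_and] at hR
        obtain ⟨hall, hone, hno, hcR⟩ := hR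
        have hfPr : ∀ p ∈ Pr, f p = i₀ := fun p hp => hfB i₀ p (hPr.1 hp)
        have hdisj : Disjoint Pr R := by
          rw [Finset.disjoint_left]
          intro p hp hpR
          exact hno p hpR (hfPr p hp)
        simp only [hGi, Finset.mem_filter, Finset.mem_univ, true_and]
        refine ⟨?_, ?_, ?_, ?_⟩
        · rw [Finset.card_union_of_disjoint hdisj, hPr.2, hcR]
          omega
        · intro hAm
          rcases Finset.mem_union.mp hAm with h | h
          · exact hBA i₀ (hPr.1 h)
          · exact (((hBmem _ A).mp (hall A h)).2) rfl
        · rw [Finset.filter_union]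
          have e1 : Pr.filter (fun p => f p = i₀) = Pr := Finset.filter_eq_self.mpr hfPr
          have e2 : R.filter (fun p => f p = i₀) = ∅ := Finset.filter_eq_empty_iff.mpr hno
          rw [e1, e2, Finset.union_empty, hPr.2]
        · intro i hi
          rw [Finset.filter_union]
          have e1 : Pr.filter (fun p => f p = i) = ∅ := by
            apply Finset.filter_eq_empty_iff.mpr
            intro p hp hfp
            exact hi (hfp ▸ (hfPr p hp).symm ▸ rfl)
          rw [e1, Finset.empty_union]
          exact hone i
      · -- left inverse
        intro K _
        dsimp only
        exact Finset.filter_union_filter_not_eq _ K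
      · -- right inverse
        rintro ⟨Pr, R⟩ hpr
        dsimp only
        rw [Finset.mem_product] at hpr
        obtain ⟨hPr, hR⟩ := hpr
        rw [Finset.mem_powersetCard] at hPr
        simp only [hSg, Finset.mem_filter, Finset.mem_univ, true_and] at hR
        obtain ⟨hall, hone, hno, hcR⟩ := hR
        have hfPr : ∀ p ∈ Pr, f p = i₀ := fun p hp => hfB i₀ p (hPr.1 hp)
        have e1 : Pr.filter (fun p => f p = i₀) = Pr := Finset.filter_eq_self.mpr hfPr
        have e2 : R.filter (fun p => f p = i₀) = ∅ := Finset.filter_eq_empty_iff.mpr hno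
        have e3 : Pr.filter (fun p => ¬ f p = i₀) = ∅ := by
          apply Finset.filter_eq_empty_iff.mpr
          intro p hp hfp
          exact hfp (hfPr p hp)
        have e4 : R.filter (fun p => ¬ f p = i₀) = R := Finset.filter_eq_self.mpr hno
        simp only [Finset.filter_union, e1, e2, e3, e4, Finset.union_empty, Finset.empty_union]
    -- count the 1-point parts
    have hSgcard : Sg.card = q.choose (w - 1) * q ^ (w - 1) := by
      have hmap : ∀ R ∈ Sg, R.image f ∈
          ((Finset.univ : Finset {ℓ : L // A ∈ ℓ}).erase i₀).powersetCard (w - 1) := by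
        intro R hR
        simp only [hSg, Finset.mem_filter, Finset.mem_univ, true_and] at hR
        obtain ⟨hall, hone, hno, hcR⟩ := hR
        rw [Finset.mem_powersetCard]
        constructor
        · intro i hi
          obtain ⟨p, hp, rfl⟩ := Finset.mem_image.mp hi
          exact Finset.mem_erase.mpr ⟨hno p hp, Finset.mem_univ _⟩
        · rw [Finset.card_image_of_injOn, hcR]
          intro p hp p' hp' hpp
          exact hinjSg R hone p hp p' hp' hpp
      rw [Finset.card_eq_sum_card_fiberwise hmap]
      have hfib : ∀ T ∈ ((Finset.univ : Finset {ℓ : L // A ∈ ℓ}).erase i₀).powersetCard (w - 1),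
          (Sg.filter (fun R => R.image f = T)).card = q ^ (w - 1) := by
        intro T hT
        rw [Finset.mem_powersetCard] at hT
        have heq : Sg.filter (fun R => R.image f = T)
            = Finset.univ.filter (fun R : Finset P =>
              (∀ p ∈ R, p ∈ B (f p)) ∧ (∀ i, (R.filter (fun p => f p = i)).card ≤ 1) ∧
                R.image f = T) := by
          ext R
          simp only [hSg, Finset.mem_filter, Finset.mem_univ, true_and]
          constructor
          · rintro ⟨⟨a, b, c, d⟩, e⟩
            exact ⟨a, b, e⟩
          · rintro ⟨a, b, e⟩
            refine ⟨⟨a, b, ?_, ?_⟩, e⟩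
            · intro p hp
              have hfp : f p ∈ T := e ▸ Finset.mem_image_of_mem f hp
              exact (Finset.mem_erase.mp (hT.1 hfp)).1
            · have himg : (R.image f).card = R.card :=
                Finset.card_image_of_injOn (fun p hp p' hp' hpp => hinjSg R b p hp p' hp' hpp)
              rw [e, hT.2] at himg
              omega
        rw [heq, htrans T]
        rw [Finset.prod_congr rfl (fun i _ => hBcard i), Finset.prod_const, hT.2]
      rw [Finset.sum_congr rfl hfib, Finset.sum_const, Finset.card_powersetCard, smul_eq_mul]
      have hcerase : ((Finset.univ : Finset {ℓ : L // A ∈ ℓ}).erase i₀).card = q := by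
        rw [Finset.card_erase_of_mem (Finset.mem_univ _), Finset.card_univ, hIcard]
        omega
      rw [hcerase]
    rw [step1, Finset.card_product, Finset.card_powersetCard, hBcard, hSgcard]
  rw [Finset.sum_congr rfl (fun i₀ _ => hper i₀), Finset.sum_const, Finset.card_univ, hIcard,
    smul_eq_mul]
  ring
end

section
/- Let q ≥ 2 and w ≥ 3 be integers, let Π be a finite projective plane of order q, and fix a point A of Π. Then the number of (w+1)-element point subsets K of Π with A ∉ K such that the sum over all lines ℓ through A of the binomial coefficient C(#(ℓ ∩ K), 2) equals exactly 2 is C(q+1,2)·C(q,2)^2·q^(w−3)·C(q−1, w−3), where C(n, k) denotes the binomial coefficient. -/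
/-!
The lines through `A` partition the remaining points into `q + 1` blocks of `q` points each, and
the secant count of `K` through `A` is `∑ C(nᵢ, 2)` over the sizes `nᵢ` of the traces of `K` on
these blocks. Given `∑ nᵢ = w + 1`, that sum is `2` exactly when two blocks meet `K` twice,
`w - 3` blocks meet it once and all others miss it. Choosing these blocks and then the points
of `K` inside them gives the product formula.
-/

open Finset Function Configuration

section PartitionCount

variable {ι α : Type*} [Fintype ι] [DecidableEq α] {fib : ι → Finset α}

lemma biUnion_inter_eq_of_subset {K : Finset α} (hK : K ⊆ univ.biUnion fib) :
    univ.biUnion (fun b => K ∩ fib b) = K := by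
  rw [← inter_biUnion, inter_eq_left.mpr hK]

lemma card_eq_sum_card_inter (hfib : Pairwise (Disjoint on fib)) {K : Finset α}
    (hK : K ⊆ univ.biUnion fib) : #K = ∑ b, #(K ∩ fib b) := by
  conv_lhs => rw [← biUnion_inter_eq_of_subset hK]
  exact card_biUnion fun b _ b' _ h => (hfib h).mono inter_subset_right inter_subset_right

lemma biUnion_inter_eq_of_forall_subset (hfib : Pairwise (Disjoint on fib)) {g : ι → Finset α}
    (hg : ∀ b, g b ⊆ fib b) (b : ι) : univ.biUnion g ∩ fib b = g b := by
  ext a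
  simp only [mem_inter, mem_biUnion, mem_univ, true_and]
  constructor
  · rintro ⟨⟨b', hab'⟩, hab⟩
    obtain rfl : b' = b := by
      by_contra hne
      exact disjoint_left.mp (hfib hne) (hg b' hab') hab
    exact hab'
  · exact fun hab => ⟨⟨b, hab⟩, hg b hab⟩

lemma sum_eq_add_four_and_sum_choose_two_eq_two_iff {n : ι → ℕ} {k : ℕ} :
    (∑ b, n b = k + 4 ∧ ∑ b, (n b).choose 2 = 2) ↔
      (∀ b, n b ≤ 2) ∧ #{b | n b = 2} = 2 ∧ #{b | n b = 1} = k := by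
  have hsums (hle : ∀ b, n b ≤ 2) : ∑ b, (n b).choose 2 = #{b | n b = 2} ∧
      ∑ b, n b = 2 * #{b | n b = 2} + #{b | n b = 1} := by
    simp only [card_filter, mul_sum, ← sum_add_distrib]
    constructor <;> refine sum_congr rfl fun b _ => ?_ <;> have := hle b <;>
      interval_cases n b <;> rfl
  constructor
  · rintro ⟨hsum, hchoose⟩
    have hle (b : ι) : n b ≤ 2 := by
      by_contra! hb
      have h3 : 3 ≤ (n b).choose 2 := Nat.choose_le_choose 2 hb
      have := single_le_sum (fun b _ => Nat.zero_le ((n b).choose 2)) (mem_univ b)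
      omega
    have := hsums hle
    exact ⟨hle, by omega, by omega⟩
  · rintro ⟨hle, h2, h1⟩
    have := hsums hle
    omega

variable [DecidableEq ι]

theorem card_filter_powerset_card_inter_eq (hfib : Pairwise (Disjoint on fib)) (n : ι → ℕ) :
    #{K ∈ (univ.biUnion fib).powerset | ∀ b, #(K ∩ fib b) = n b} =
      ∏ b, (#(fib b)).choose (n b) := by
  simp only [← card_powersetCard, ← Fintype.card_piFinset]
  refine card_nbij' (fun K b => K ∩ fib b) (fun g => univ.biUnion g) ?hi ?hj ?left_inv ?right_inv <;>
    intro x hx <;>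
    simp only [mem_coe, mem_filter, mem_powerset, Fintype.mem_piFinset, mem_powersetCard] at hx ⊢
  case hi => exact fun b => ⟨inter_subset_right, hx.2 b⟩
  case hj =>
    simp only [biUnion_inter_eq_of_forall_subset hfib fun b => (hx b).1]
    exact ⟨biUnion_mono fun b _ => (hx b).1, fun b => (hx b).2⟩
  case left_inv => exact biUnion_inter_eq_of_subset hx.1
  case right_inv => exact funext <| biUnion_inter_eq_of_forall_subset hfib fun b => (hx b).1

variable (ι) in
def twoPairProfiles (k : ℕ) : Finset (ι → ℕ) :=
  {n ∈ Fintype.piFinset fun _ => range 3 | #{b | n b = 2} = 2 ∧ #{b | n b = 1} = k}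

lemma mem_twoPairProfiles {k : ℕ} {n : ι → ℕ} :
    n ∈ twoPairProfiles ι k ↔ (∀ b, n b ≤ 2) ∧ #{b | n b = 2} = 2 ∧ #{b | n b = 1} = k := by
  simp only [twoPairProfiles, mem_filter, Fintype.mem_piFinset, mem_range, Nat.lt_succ_iff]

lemma card_twoPairProfiles (k : ℕ) :
    #(twoPairProfiles ι k) = (Fintype.card ι).choose 2 * (Fintype.card ι - 2).choose k := by
  have hpairs : #((univ.powersetCard 2).sigma fun s : Finset ι => sᶜ.powersetCard k) =
      (Fintype.card ι).choose 2 * (Fintype.card ι - 2).choose k := by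
    rw [card_sigma, sum_const_nat fun s hs => ?_, card_powersetCard, card_univ]
    rw [card_powersetCard, card_compl, (mem_powersetCard.mp hs).2]
  have hlevels (s t : Finset ι) (hts : t ⊆ sᶜ) :
      ({b | (if b ∈ s then 2 else if b ∈ t then 1 else 0) = 2} : Finset ι) = s ∧
        ({b | (if b ∈ s then 2 else if b ∈ t then 1 else 0) = 1} : Finset ι) = t := by
    constructor <;> ext b <;> have := @hts b <;>
      simp only [mem_compl, mem_filter, mem_univ, true_and] at this ⊢ <;> split_ifs <;> simp_all
  rw [← hpairs]
  refine card_nbij'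
    (fun n => (⟨({b | n b = 2} : Finset ι), ({b | n b = 1} : Finset ι)⟩ :
      (_ : Finset ι) × Finset ι))
    (fun st b => if b ∈ st.1 then 2 else if b ∈ st.2 then 1 else 0) ?_ ?_ ?_ ?_
  · intro n hn
    obtain ⟨-, h2, h1⟩ := mem_twoPairProfiles.mp hn
    simp only [mem_coe, mem_sigma, mem_powersetCard, subset_univ, true_and]
    refine ⟨h2, fun b hb => ?_, h1⟩
    simp only [mem_filter, mem_univ, true_and, mem_compl] at hb ⊢
    omega
  · rintro ⟨s, t⟩ hst
    simp only [mem_coe, mem_sigma, mem_powersetCard, subset_univ, true_and] at hst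
    obtain ⟨hs, hts, ht⟩ := hst
    rw [mem_coe, mem_twoPairProfiles, (hlevels s t hts).1, (hlevels s t hts).2]
    exact ⟨fun b => by dsimp only; split_ifs <;> omega, hs, ht⟩
  · intro n hn
    have hle := (mem_twoPairProfiles.mp hn).1
    funext b
    have := hle b
    simp only [mem_filter, mem_univ, true_and]
    split_ifs <;> omega
  · rintro ⟨s, t⟩ hst
    simp only [mem_coe, mem_sigma, mem_powersetCard] at hst
    simp only [(hlevels s t hst.2.1).1, (hlevels s t hst.2.1).2]

lemma prod_choose_of_mem_twoPairProfiles (q : ℕ) {k : ℕ} {n : ι → ℕ}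
    (hn : n ∈ twoPairProfiles ι k) : ∏ b, q.choose (n b) = q.choose 2 ^ 2 * q ^ k := by
  obtain ⟨hle, h2, h1⟩ := mem_twoPairProfiles.mp hn
  calc ∏ b, q.choose (n b)
      = ∏ b, (if n b = 2 then q.choose 2 else 1) * (if n b = 1 then q else 1) := by
        refine prod_congr rfl fun b _ => ?_
        have := hle b
        interval_cases n b <;> simp
    _ = q.choose 2 ^ 2 * q ^ k := by
        rw [prod_mul_distrib, ← prod_filter, ← prod_filter, prod_const, prod_const, h2, h1]

theorem card_subsets_two_pairs (hfib : Pairwise (Disjoint on fib)) {q : ℕ}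
    (hcard : ∀ b, #(fib b) = q) (k : ℕ) :
    #{K ∈ (univ.biUnion fib).powerset | #K = k + 4 ∧ ∑ b, (#(K ∩ fib b)).choose 2 = 2} =
      (Fintype.card ι).choose 2 * q.choose 2 ^ 2 * q ^ k * (Fintype.card ι - 2).choose k := by
  have hprofile : {K ∈ (univ.biUnion fib).powerset |
      #K = k + 4 ∧ ∑ b, (#(K ∩ fib b)).choose 2 = 2} =
      {K ∈ (univ.biUnion fib).powerset | (fun b => #(K ∩ fib b)) ∈ twoPairProfiles ι k} := by
    refine filter_congr fun K hK => ?_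
    rw [card_eq_sum_card_inter hfib (mem_powerset.mp hK), mem_twoPairProfiles,
      sum_eq_add_four_and_sum_choose_two_eq_two_iff]
  have hfiber : ∀ n ∈ twoPairProfiles ι k,
      #{K ∈ (univ.biUnion fib).powerset | (fun b => #(K ∩ fib b)) = n} =
        q.choose 2 ^ 2 * q ^ k := by
    intro n hn
    simp only [funext_iff]
    rw [card_filter_powerset_card_inter_eq hfib]
    simp only [hcard]
    exact prod_choose_of_mem_twoPairProfiles q hn
  rw [hprofile, ← sum_card_fiberwise_eq_card_filter, sum_const_nat hfiber, card_twoPairProfiles]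
  ring

end PartitionCount

section ProjectivePlane

open scoped Classical

variable {P L : Type*} [Membership P L] [Fintype P]

noncomputable def puncturedLine (A : P) (ℓ : L) : Finset P := ({p | p ∈ ℓ} : Finset P).erase A

lemma mem_puncturedLine {A p : P} {ℓ : L} : p ∈ puncturedLine A ℓ ↔ p ≠ A ∧ p ∈ ℓ := by
  simp [puncturedLine]

lemma secantCount_eq_sum_puncturedLine [Fintype L] {A : P} {K : Finset P} (hA : A ∉ K) :
    secantCount L (K : Set P) A =
      ∑ ℓ : {ℓ : L // A ∈ ℓ}, (#(K ∩ puncturedLine A ℓ.1)).choose 2 := by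
  have hsecant (ℓ : L) : {p ∈ (K : Set P) | p ∈ ℓ} = ↑(K ∩ puncturedLine A ℓ) := by
    ext p
    simp only [Set.mem_ofPred_eq, mem_coe, mem_inter, mem_puncturedLine]
    exact ⟨fun h => ⟨h.1, ne_of_mem_of_not_mem h.1 hA, h.2⟩, fun h => ⟨h.1, h.2.2⟩⟩
  rw [secantCount, ← sum_filter]
  simp only [hsecant, Set.ncard_coe_finset]
  exact sum_subtype _ (fun ℓ => mem_filter_univ ℓ) _

variable [ProjectivePlane P L]

lemma pairwise_disjoint_puncturedLine (A : P) :
    Pairwise (Disjoint on fun ℓ : {ℓ : L // A ∈ ℓ} => puncturedLine A ℓ.1) := by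
  intro ℓ ℓ' hne
  refine disjoint_left.mpr fun p hp hp' => ?_
  rw [mem_puncturedLine] at hp hp'
  exact hne (Subtype.ext ((Nondegenerate.eq_or_eq hp.2 ℓ.2 hp'.2 ℓ'.2).resolve_left hp.1))

variable [Fintype L]

lemma card_linesThrough (A : P) :
    Fintype.card {ℓ : L // A ∈ ℓ} = ProjectivePlane.order P L + 1 := by
  rw [← Nat.card_eq_fintype_card, ← ProjectivePlane.lineCount_eq]
  rfl

lemma card_puncturedLine {A : P} {ℓ : L} (hA : A ∈ ℓ) :
    #(puncturedLine A ℓ) = ProjectivePlane.order P L := by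
  have h := ProjectivePlane.pointCount_eq P ℓ
  rw [pointCount, Nat.card_eq_fintype_card, Fintype.card_subtype] at h
  rw [puncturedLine, card_erase_of_mem (by simpa using hA), h]
  rfl

lemma biUnion_puncturedLine (A : P) :
    univ.biUnion (fun ℓ : {ℓ : L // A ∈ ℓ} => puncturedLine A ℓ.1) = {A}ᶜ := by
  ext p
  simp only [mem_biUnion, mem_univ, true_and, mem_puncturedLine, mem_compl, mem_singleton]
  refine ⟨fun ⟨_, hp, _⟩ => hp, fun hp => ?_⟩
  exact ⟨⟨HasLines.mkLine hp, (HasLines.mkLine_ax hp).2⟩, hp, (HasLines.mkLine_ax hp).1⟩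

end ProjectivePlane

theorem card_subsets_covering_exactly_twice_general (q w : ℕ) (hw : 3 ≤ w)
    (P L : Type*) [Fintype P] [Fintype L] [Membership P L]
    [Configuration.ProjectivePlane P L]
    (horder : Configuration.ProjectivePlane.order P L = q) (A : P) :
    Nat.card {K : Finset P // K.card = w + 1 ∧ A ∉ K ∧ secantCount L (↑K : Set P) A = 2} =
      (q + 1).choose 2 * q.choose 2 ^ 2 * q ^ (w - 3) * (q - 1).choose (w - 3) := by
  classical
  have hcount := card_subsets_two_pairs (pairwise_disjoint_puncturedLine A)
    (fun ℓ => (card_puncturedLine ℓ.2).trans horder) (w - 3)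
  rw [biUnion_puncturedLine, card_linesThrough, horder, show w - 3 + 4 = w + 1 by omega,
    show q + 1 - 2 = q - 1 by omega] at hcount
  rw [Nat.card_eq_fintype_card, Fintype.card_subtype, ← hcount]
  congr 1
  ext K
  simp only [mem_filter, mem_univ, true_and, mem_powerset, subset_compl_singleton]
  by_cases hA : A ∈ K
  · simp only [hA, not_true_eq_false, false_and, and_false]
  · rw [secantCount_eq_sum_puncturedLine hA]
    tauto

theorem card_subsets_covering_exactly_twice (q w : ℕ) (hq : 2 ≤ q) (hw : 3 ≤ w)
    (P L : Type*) [Fintype P] [Fintype L] [Membership P L]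
    [Configuration.ProjectivePlane P L]
    (horder : Configuration.ProjectivePlane.order P L = q) (A : P) :
    Nat.card {K : Finset P // K.card = w + 1 ∧ A ∉ K ∧ secantCount L (↑K : Set P) A = 2} =
      (q + 1).choose 2 * q.choose 2 ^ 2 * q ^ (w - 3) * (q - 1).choose (w - 3) :=
  card_subsets_covering_exactly_twice_general q w hw P L horder A
end

section
/- Let q ≥ 2 and w ≥ 5 be integers, let Π be a finite projective plane of order q, and fix a point A of Π. Then the number of (w+1)-element point subsets K of Π with A ∉ K such that the sum over all lines ℓ through A of the binomial coefficient C(#(ℓ ∩ K), 2) equals exactly 3 is (q+1)·C(q,3)·q^(w−2)·C(q, w−2) + C(q+1,3)·C(q,2)^3·q^(w−5)·C(q−2, w−5), where C(n, k) denotes the binomial coefficient. -/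
open Finset

section Profiles

variable {ι : Type*} [Fintype ι] [DecidableEq ι]

/-- A profile function: value `c` on `u`, value `d` on `v`, `0` elsewhere. -/
def prof2 (u v : Finset ι) (c d : ℕ) : ι → ℕ :=
  fun ℓ => if ℓ ∈ u then c else if ℓ ∈ v then d else 0

lemma sum_g_prof2 (u v : Finset ι) (h : Disjoint u v) (c d : ℕ) (g : ℕ → ℕ) (hg : g 0 = 0) :
    ∑ ℓ, g (prof2 u v c d ℓ) = u.card * g c + v.card * g d := by
  rw [← Finset.sum_sdiff (Finset.subset_univ u)]
  have h1 : ∑ ℓ ∈ u, g (prof2 u v c d ℓ) = u.card * g c := by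
    have hc' : ∀ ℓ ∈ u, g (prof2 u v c d ℓ) = g c := fun ℓ hℓ => by simp [prof2, hℓ]
    rw [Finset.sum_congr rfl hc', Finset.sum_const, smul_eq_mul]
  have h2 : ∑ ℓ ∈ Finset.univ \ u, g (prof2 u v c d ℓ) = v.card * g d := by
    have hv : (Finset.univ \ u) ∩ v = v := by
      rw [Finset.inter_eq_right, Finset.subset_sdiff]
      exact ⟨Finset.subset_univ v, h.symm⟩
    calc ∑ ℓ ∈ Finset.univ \ u, g (prof2 u v c d ℓ)
        = ∑ ℓ ∈ Finset.univ \ u, (if ℓ ∈ v then g d else 0) := by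
          refine Finset.sum_congr rfl fun ℓ hℓ => ?_
          have : ℓ ∉ u := (Finset.mem_sdiff.mp hℓ).2
          by_cases hv' : ℓ ∈ v <;> simp [prof2, this, hv', hg]
      _ = ∑ ℓ ∈ (Finset.univ \ u) ∩ v, g d := by rw [Finset.sum_ite_mem]
      _ = v.card * g d := by rw [hv, Finset.sum_const, smul_eq_mul]
  omega

lemma prod_g_prof2 (u v : Finset ι) (h : Disjoint u v) (c d : ℕ) (g : ℕ → ℕ) (hg : g 0 = 1) :
    ∏ ℓ, g (prof2 u v c d ℓ) = g c ^ u.card * g d ^ v.card := by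
  rw [← Finset.prod_sdiff (Finset.subset_univ u)]
  have h1 : ∏ ℓ ∈ u, g (prof2 u v c d ℓ) = g c ^ u.card := by
    have hc' : ∀ ℓ ∈ u, g (prof2 u v c d ℓ) = g c := fun ℓ hℓ => by simp [prof2, hℓ]
    rw [Finset.prod_congr rfl hc', Finset.prod_const]
  have h2 : ∏ ℓ ∈ Finset.univ \ u, g (prof2 u v c d ℓ) = g d ^ v.card := by
    have hv : (Finset.univ \ u) ∩ v = v := by
      rw [Finset.inter_eq_right, Finset.subset_sdiff]
      exact ⟨Finset.subset_univ v, h.symm⟩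
    calc ∏ ℓ ∈ Finset.univ \ u, g (prof2 u v c d ℓ)
        = ∏ ℓ ∈ Finset.univ \ u, (if ℓ ∈ v then g d else 1) := by
          refine Finset.prod_congr rfl fun ℓ hℓ => ?_
          have : ℓ ∉ u := (Finset.mem_sdiff.mp hℓ).2
          by_cases hv' : ℓ ∈ v <;> simp [prof2, this, hv', hg]
      _ = ∏ ℓ ∈ (Finset.univ \ u) ∩ v, g d := by rw [Finset.prod_ite_mem]
      _ = g d ^ v.card := by rw [hv, Finset.prod_const]
  rw [h1, h2, mul_comm]

lemma prof2_mem_iff {u v : Finset ι} {c d : ℕ} (hduv : Disjoint u v) (hc : c ≠ d) (hc0 : c ≠ 0)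
    (hd0 : d ≠ 0) (ℓ : ι) :
    (prof2 u v c d ℓ = c ↔ ℓ ∈ u) ∧ (prof2 u v c d ℓ = d ↔ ℓ ∈ v) := by
  unfold prof2
  by_cases h1 : ℓ ∈ u <;> by_cases h2 : ℓ ∈ v
  · exact absurd (hduv.forall_ne_finset h1 h2) (by simp)
  · simp [h1, h2, hc]
  · simp [h1, h2, Ne.symm hc]
  · simp [h1, h2, Ne.symm hc0, Ne.symm hd0]

lemma prof2_inj {u v u' v' : Finset ι} {c d : ℕ} (hd1 : Disjoint u v) (hd2 : Disjoint u' v')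
    (hc : c ≠ d) (hc0 : c ≠ 0) (hd0 : d ≠ 0)
    (h : prof2 u v c d = prof2 u' v' c d) : u = u' ∧ v = v' := by
  constructor
  · ext ℓ
    rw [← (prof2_mem_iff hd1 hc hc0 hd0 ℓ).1, ← (prof2_mem_iff hd2 hc hc0 hd0 ℓ).1, h]
  · ext ℓ
    rw [← (prof2_mem_iff hd1 hc hc0 hd0 ℓ).2, ← (prof2_mem_iff hd2 hc hc0 hd0 ℓ).2, h]

lemma classify {w : ℕ} (hw : 5 ≤ w) (n : ι → ℕ) (h3 : ∑ ℓ, (n ℓ).choose 2 = 3)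
    (h1 : ∑ ℓ, n ℓ = w + 1) :
    (∃ a : ι, ∃ s : Finset ι, a ∉ s ∧ s.card = w - 2 ∧ n = prof2 {a} s 3 1) ∨
    (∃ t s : Finset ι, Disjoint t s ∧ t.card = 3 ∧ s.card = w - 5 ∧ n = prof2 t s 2 1) := by
  have hle : ∀ ℓ, n ℓ ≤ 3 := by
    intro ℓ
    by_contra hcon
    have h4 : (4 : ℕ).choose 2 ≤ (n ℓ).choose 2 := Nat.choose_le_choose 2 (by omega)
    have h6 : (4 : ℕ).choose 2 = 6 := by decide
    have h5 : (n ℓ).choose 2 ≤ ∑ ℓ, (n ℓ).choose 2 := Finset.single_le_sum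
      (f := fun ℓ => (n ℓ).choose 2) (fun _ _ => Nat.zero_le _) (Finset.mem_univ ℓ)
    omega
  set t3 := Finset.univ.filter (fun ℓ => n ℓ = 3) with ht3
  set t2 := Finset.univ.filter (fun ℓ => n ℓ = 2) with ht2
  set t1 := Finset.univ.filter (fun ℓ => n ℓ = 1) with ht1
  have m3 : ∀ ℓ, ℓ ∈ t3 ↔ n ℓ = 3 := fun ℓ => by simp [ht3]
  have m2 : ∀ ℓ, ℓ ∈ t2 ↔ n ℓ = 2 := fun ℓ => by simp [ht2]
  have m1 : ∀ ℓ, ℓ ∈ t1 ↔ n ℓ = 1 := fun ℓ => by simp [ht1]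
  have e3 : ∑ ℓ, (n ℓ).choose 2 = 3 * t3.card + t2.card := by
    rw [Finset.card_filter, Finset.card_filter, Finset.mul_sum, ← Finset.sum_add_distrib]
    refine Finset.sum_congr rfl fun ℓ _ => ?_
    have := hle ℓ
    interval_cases (n ℓ) <;> simp
  have e1 : ∑ ℓ, n ℓ = 3 * t3.card + 2 * t2.card + t1.card := by
    rw [Finset.card_filter, Finset.card_filter, Finset.card_filter, Finset.mul_sum,
      Finset.mul_sum, ← Finset.sum_add_distrib, ← Finset.sum_add_distrib]
    refine Finset.sum_congr rfl fun ℓ _ => ?_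
    have := hle ℓ
    interval_cases (n ℓ) <;> simp
  rcases (by omega : (t3.card = 1 ∧ t2.card = 0) ∨ (t3.card = 0 ∧ t2.card = 3)) with
    ⟨ha, hb⟩ | ⟨ha, hb⟩
  · obtain ⟨a, hae⟩ := Finset.card_eq_one.mp ha
    have hna : n a = 3 := (m3 a).mp (hae ▸ Finset.mem_singleton_self a)
    left
    refine ⟨a, t1, ?_, by omega, ?_⟩
    · intro hmem
      have := (m1 a).mp hmem
      omega
    · funext ℓ
      have hb' : n ℓ ≠ 2 := fun h => by
        have hmem := (m2 ℓ).mpr h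
        rw [Finset.card_eq_zero] at hb
        simp [hb] at hmem
      unfold prof2
      by_cases heq : ℓ = a
      · subst heq; simp [hna]
      · have hn3 : n ℓ ≠ 3 := fun h => heq (by
          have := (m3 ℓ).mpr h
          rw [hae] at this
          exact Finset.mem_singleton.mp this)
        rw [if_neg (by simpa using heq)]
        by_cases ht : ℓ ∈ t1
        · rw [if_pos ht]; exact (m1 ℓ).mp ht
        · have hn1 : n ℓ ≠ 1 := fun h => ht ((m1 ℓ).mpr h)
          have := hle ℓ
          rw [if_neg ht]
          omega
  · right
    refine ⟨t2, t1, ?_, hb, by omega, ?_⟩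
    · rw [Finset.disjoint_left]
      intro ℓ h2' h1'
      have := (m2 ℓ).mp h2'
      have := (m1 ℓ).mp h1'
      omega
    · funext ℓ
      have hn3 : n ℓ ≠ 3 := fun h => by
        have hmem := (m3 ℓ).mpr h
        rw [Finset.card_eq_zero] at ha
        simp [ha] at hmem
      unfold prof2
      by_cases h2' : ℓ ∈ t2
      · rw [if_pos h2']; exact (m2 ℓ).mp h2'
      · have hn2 : n ℓ ≠ 2 := fun h => h2' ((m2 ℓ).mpr h)
        rw [if_neg h2']
        by_cases h1' : ℓ ∈ t1
        · rw [if_pos h1']; exact (m1 ℓ).mp h1'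
        · have hn1 : n ℓ ≠ 1 := fun h => h1' ((m1 ℓ).mpr h)
          have := hle ℓ
          rw [if_neg h1']
          omega

end Profiles

lemma count_main {ι P : Type*} [Fintype ι] [DecidableEq ι] [Fintype P]
    (q w : ℕ) (hq : 2 ≤ q) (hw : 5 ≤ w)
    (fib : ι → Finset P) (hfib : ∀ i, (fib i).card = q) (hcard : Fintype.card ι = q + 1) :
    ((Fintype.piFinset fun i => (fib i).powerset).filter
        (fun f => (∑ i, (f i).card) = w + 1 ∧ (∑ i, ((f i).card).choose 2) = 3)).card =
      (q + 1) * q.choose 3 * q ^ (w - 2) * q.choose (w - 2) +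
        (q + 1).choose 3 * q.choose 2 ^ 3 * q ^ (w - 5) * (q - 2).choose (w - 5) := by
  classical
  set GF := (Fintype.piFinset fun i => (fib i).powerset).filter
      (fun f => (∑ i, (f i).card) = w + 1 ∧ (∑ i, ((f i).card).choose 2) = 3) with hGF
  set sigA : Finset (Σ _ : ι, Finset ι) :=
    (Finset.univ : Finset ι).sigma (fun a => ((Finset.univ.erase a)).powersetCard (w - 2))
    with hsigA
  set sigB : Finset (Σ _ : Finset ι, Finset ι) :=
    ((Finset.univ : Finset ι).powersetCard 3).sigma
      (fun t => ((Finset.univ \ t)).powersetCard (w - 5)) with hsigB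
  set PA := sigA.image (fun x => prof2 {x.1} x.2 3 1) with hPA
  set PB := sigB.image (fun x => prof2 x.1 x.2 2 1) with hPB
  have memsigA : ∀ x : Σ _ : ι, Finset ι, x ∈ sigA ↔ x.1 ∉ x.2 ∧ x.2.card = w - 2 := by
    intro x
    simp only [hsigA, Finset.mem_sigma, Finset.mem_univ, true_and, Finset.mem_powersetCard,
      Finset.subset_erase]
    constructor
    · rintro ⟨⟨-, h1⟩, h2⟩
      exact ⟨h1, h2⟩
    · rintro ⟨h1, h2⟩
      exact ⟨⟨Finset.subset_univ _, h1⟩, h2⟩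
  have memsigB : ∀ x : Σ _ : Finset ι, Finset ι,
      x ∈ sigB ↔ x.1.card = 3 ∧ Disjoint x.1 x.2 ∧ x.2.card = w - 5 := by
    intro x
    rw [hsigB]
    constructor
    · intro hx
      obtain ⟨h1, h2⟩ := Finset.mem_sigma.mp hx
      obtain ⟨-, h1c⟩ := Finset.mem_powersetCard.mp h1
      obtain ⟨h2s, h2c⟩ := Finset.mem_powersetCard.mp h2
      obtain ⟨-, hdisj⟩ := Finset.subset_sdiff.mp h2s
      exact ⟨h1c, hdisj.symm, h2c⟩
    · rintro ⟨h1, h2, h3⟩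
      exact Finset.mem_sigma.mpr ⟨Finset.mem_powersetCard.mpr ⟨Finset.subset_univ _, h1⟩,
        Finset.mem_powersetCard.mpr ⟨Finset.subset_sdiff.mpr
          ⟨Finset.subset_univ _, h2.symm⟩, h3⟩⟩
  have memPA : ∀ n : ι → ℕ,
      n ∈ PA ↔ ∃ a s, a ∉ s ∧ s.card = w - 2 ∧ n = prof2 {a} s 3 1 := by
    intro n
    simp only [hPA, Finset.mem_image]
    constructor
    · rintro ⟨x, hx, rfl⟩
      obtain ⟨h1, h2⟩ := (memsigA x).mp hx
      exact ⟨x.1, x.2, h1, h2, rfl⟩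
    · rintro ⟨a, s, h1, h2, rfl⟩
      exact ⟨⟨a, s⟩, (memsigA ⟨a, s⟩).mpr ⟨h1, h2⟩, rfl⟩
  have memPB : ∀ n : ι → ℕ,
      n ∈ PB ↔ ∃ t s, Disjoint t s ∧ t.card = 3 ∧ s.card = w - 5 ∧ n = prof2 t s 2 1 := by
    intro n
    simp only [hPB, Finset.mem_image]
    constructor
    · rintro ⟨x, hx, rfl⟩
      obtain ⟨h1, h2, h3⟩ := (memsigB x).mp hx
      exact ⟨x.1, x.2, h2, h1, h3, rfl⟩
    · rintro ⟨t, s, h1, h2, h3, rfl⟩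
      exact ⟨⟨t, s⟩, (memsigB ⟨t, s⟩).mpr ⟨h2, h1, h3⟩, rfl⟩
  -- sums of valid profiles
  have validA : ∀ (a : ι) (s : Finset ι), a ∉ s → s.card = w - 2 →
      (∑ i, prof2 {a} s 3 1 i) = w + 1 ∧ (∑ i, (prof2 {a} s 3 1 i).choose 2) = 3 := by
    intro a s ha hs
    have hdisj : Disjoint ({a} : Finset ι) s := Finset.disjoint_singleton_left.mpr ha
    constructor
    · have := sum_g_prof2 {a} s hdisj 3 1 id rfl
      simp only [id] at this
      rw [this, Finset.card_singleton, hs]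
      omega
    · have := sum_g_prof2 {a} s hdisj 3 1 (fun m => m.choose 2) rfl
      rw [this, Finset.card_singleton]
      norm_num
  have validB : ∀ (t s : Finset ι), Disjoint t s → t.card = 3 → s.card = w - 5 →
      (∑ i, prof2 t s 2 1 i) = w + 1 ∧ (∑ i, (prof2 t s 2 1 i).choose 2) = 3 := by
    intro t s hdisj ht hs
    constructor
    · have := sum_g_prof2 t s hdisj 2 1 id rfl
      simp only [id] at this
      rw [this, ht, hs]
      omega
    · have := sum_g_prof2 t s hdisj 2 1 (fun m => m.choose 2) rfl
      rw [this, ht, hs]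
      norm_num
  have hvalid : ∀ n ∈ PA ∪ PB, (∑ i, n i) = w + 1 ∧ (∑ i, (n i).choose 2) = 3 := by
    intro n hn
    rcases Finset.mem_union.mp hn with hn | hn
    · obtain ⟨a, s, h1, h2, rfl⟩ := (memPA n).mp hn
      exact validA a s h1 h2
    · obtain ⟨t, s, h1, h2, h3, rfl⟩ := (memPB n).mp hn
      exact validB t s h1 h2 h3
  have hmaps : ∀ f ∈ GF, (fun i => (f i).card) ∈ PA ∪ PB := by
    intro f hf
    obtain ⟨-, hsum, hch⟩ := Finset.mem_filter.mp hf
    rcases classify hw (fun i => (f i).card) hch hsum with ⟨a, s, h1, h2, h3⟩ | ⟨t, s, h1, h2, h3, h4⟩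
    · exact Finset.mem_union_left _ ((memPA _).mpr ⟨a, s, h1, h2, h3⟩)
    · exact Finset.mem_union_right _ ((memPB _).mpr ⟨t, s, h1, h2, h3, h4⟩)
  rw [hGF] at hmaps ⊢
  rw [Finset.card_eq_sum_card_fiberwise hmaps]
  rw [← hGF]
  have fibercard : ∀ n ∈ PA ∪ PB,
      (GF.filter fun f => (fun i => (f i).card) = n).card = ∏ i, q.choose (n i) := by
    intro n hn
    have hval := hvalid n hn
    have heq : GF.filter (fun f => (fun i => (f i).card) = n) =
        Fintype.piFinset fun i => (fib i).powersetCard (n i) := by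
      ext f
      simp only [hGF, Finset.mem_filter, Fintype.mem_piFinset, Finset.mem_powerset,
        Finset.mem_powersetCard, funext_iff]
      constructor
      · rintro ⟨⟨hf, -, -⟩, hfn⟩ i
        exact ⟨hf i, hfn i⟩
      · intro h
        have hcards : ∀ i, (f i).card = n i := fun i => (h i).2
        refine ⟨⟨fun i => (h i).1, ?_, ?_⟩, hcards⟩
        · simp only [hcards]; exact hval.1
        · simp only [hcards]; exact hval.2
    rw [heq, Fintype.card_piFinset]
    exact Finset.prod_congr rfl fun i _ => by rw [Finset.card_powersetCard, hfib]
  rw [Finset.sum_congr rfl fibercard]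
  have hdisjPAB : Disjoint PA PB := by
    rw [Finset.disjoint_left]
    intro n hnA hnB
    obtain ⟨a, s, h1, h2, rfl⟩ := (memPA n).mp hnA
    obtain ⟨t, s', hd, h3, h4, heq⟩ := (memPB _).mp hnB
    have := congrFun heq a
    simp only [prof2, Finset.mem_singleton, if_pos rfl] at this
    split_ifs at this <;> omega
  rw [Finset.sum_union hdisjPAB]
  -- sum over PA
  have hsumA : ∑ n ∈ PA, ∏ i, q.choose (n i) =
      (q + 1) * q.choose 3 * q ^ (w - 2) * q.choose (w - 2) := by
    rw [hPA, Finset.sum_image]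
    · have hconst : ∀ x ∈ sigA, (∏ i, q.choose (prof2 {x.1} x.2 3 1 i)) =
          q.choose 3 * q ^ (w - 2) := by
        intro x hx
        obtain ⟨h1, h2⟩ := (memsigA x).mp hx
        rw [prod_g_prof2 {x.1} x.2 (Finset.disjoint_singleton_left.mpr h1) 3 1
          (fun m => q.choose m) (Nat.choose_zero_right q)]
        rw [Finset.card_singleton, h2, pow_one, Nat.choose_one_right]
      rw [Finset.sum_congr rfl hconst, Finset.sum_const, smul_eq_mul]
      have hsigAcard : sigA.card = (q + 1) * q.choose (w - 2) := by
        rw [hsigA, Finset.card_sigma]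
        have : ∀ a : ι, ((Finset.univ.erase a).powersetCard (w - 2)).card =
            q.choose (w - 2) := by
          intro a
          rw [Finset.card_powersetCard, Finset.card_erase_of_mem (Finset.mem_univ a),
            Finset.card_univ, hcard]
          norm_num
        rw [Finset.sum_congr rfl (fun a _ => this a), Finset.sum_const, Finset.card_univ,
          hcard, smul_eq_mul]
      rw [hsigAcard]
      ring
    · intro x hx y hy hxy
      obtain ⟨hx1, -⟩ := (memsigA x).mp hx
      obtain ⟨hy1, -⟩ := (memsigA y).mp hy
      obtain ⟨hu, hv⟩ := prof2_inj (Finset.disjoint_singleton_left.mpr hx1)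
        (Finset.disjoint_singleton_left.mpr hy1) (by norm_num) (by norm_num) (by norm_num) hxy
      have h1 : x.1 = y.1 := Finset.singleton_injective hu
      obtain ⟨x1, x2⟩ := x
      obtain ⟨y1, y2⟩ := y
      simp only at h1 hv
      subst h1
      subst hv
      rfl
  have hsumB : ∑ n ∈ PB, ∏ i, q.choose (n i) =
      (q + 1).choose 3 * q.choose 2 ^ 3 * q ^ (w - 5) * (q - 2).choose (w - 5) := by
    rw [hPB, Finset.sum_image]
    · have hconst : ∀ x ∈ sigB, (∏ i, q.choose (prof2 x.1 x.2 2 1 i)) =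
          q.choose 2 ^ 3 * q ^ (w - 5) := by
        intro x hx
        obtain ⟨h1, h2, h3⟩ := (memsigB x).mp hx
        rw [prod_g_prof2 x.1 x.2 h2 2 1 (fun m => q.choose m) (Nat.choose_zero_right q)]
        rw [h1, h3, Nat.choose_one_right]
      rw [Finset.sum_congr rfl hconst, Finset.sum_const, smul_eq_mul]
      have hsigBcard : sigB.card = (q + 1).choose 3 * (q - 2).choose (w - 5) := by
        rw [hsigB, Finset.card_sigma]
        have hinner : ∀ t ∈ (Finset.univ : Finset ι).powersetCard 3,
            ((Finset.univ \ t).powersetCard (w - 5)).card = (q - 2).choose (w - 5) := by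
          intro t ht
          obtain ⟨-, htc⟩ := Finset.mem_powersetCard.mp ht
          rw [Finset.card_powersetCard, Finset.card_sdiff_of_subset (Finset.subset_univ t),
            Finset.card_univ, hcard, htc]
          congr 1
        rw [Finset.sum_congr rfl hinner, Finset.sum_const, Finset.card_powersetCard,
          Finset.card_univ, hcard, smul_eq_mul]
      rw [hsigBcard]
      ring
    · intro x hx y hy hxy
      obtain ⟨-, hx2, -⟩ := (memsigB x).mp hx
      obtain ⟨-, hy2, -⟩ := (memsigB y).mp hy
      obtain ⟨hu, hv⟩ := prof2_inj hx2 hy2 (by norm_num) (by norm_num) (by norm_num) hxy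
      obtain ⟨x1, x2⟩ := x
      obtain ⟨y1, y2⟩ := y
      simp only at hu hv
      subst hu
      subst hv
      rfl
  rw [hsumA, hsumB]

theorem card_subsets_covering_exactly_three_times (q w : ℕ) (hq : 2 ≤ q) (hw : 5 ≤ w)
    (P L : Type*) [Fintype P] [Fintype L] [Membership P L]
    [Configuration.ProjectivePlane P L]
    (horder : Configuration.ProjectivePlane.order P L = q) (A : P) :
    Nat.card {K : Finset P // K.card = w + 1 ∧ A ∉ K ∧ secantCount L (↑K : Set P) A = 3} =
      (q + 1) * q.choose 3 * q ^ (w - 2) * q.choose (w - 2) +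
        (q + 1).choose 3 * q.choose 2 ^ 3 * q ^ (w - 5) * (q - 2).choose (w - 5) := by
  classical
  rw [Nat.card_eq_fintype_card, Fintype.card_subtype]
  set ι := {ℓ : L // A ∈ ℓ} with hι
  set fib : ι → Finset P := fun ℓ => Finset.univ.filter (fun p => p ∈ ℓ.1 ∧ p ≠ A) with hfib_def
  have hmemfib : ∀ (p : P) (ℓ : ι), p ∈ fib ℓ ↔ p ∈ ℓ.1 ∧ p ≠ A := by
    intro p ℓ
    simp [hfib_def]
  -- existence and uniqueness of fiber containing a point ≠ A
  have hexu : ∀ p : P, p ≠ A → ∃! ℓ : ι, p ∈ fib ℓ := by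
    intro p hp
    refine ⟨⟨Configuration.HasLines.mkLine hp, (Configuration.HasLines.mkLine_ax hp).2⟩,
      (hmemfib p _).mpr ⟨(Configuration.HasLines.mkLine_ax hp).1, hp⟩, ?_⟩
    intro ℓ hℓ
    obtain ⟨hpl, -⟩ := (hmemfib p ℓ).mp hℓ
    have := Configuration.Nondegenerate.eq_or_eq (P := P) (L := L) hpl ℓ.2
      (Configuration.HasLines.mkLine_ax hp).1 (Configuration.HasLines.mkLine_ax hp).2
    exact Subtype.ext (this.resolve_left hp)
  have hdisj : ∀ ℓ ℓ' : ι, ℓ ≠ ℓ' → Disjoint (fib ℓ) (fib ℓ') := by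
    intro ℓ ℓ' hne
    rw [Finset.disjoint_left]
    intro p hp hp'
    have hpA : p ≠ A := ((hmemfib p ℓ).mp hp).2
    obtain ⟨u, -, huniq⟩ := hexu p hpA
    exact hne ((huniq ℓ hp).trans (huniq ℓ' hp').symm)
  have hfibcard : ∀ ℓ : ι, (fib ℓ).card = q := by
    intro ℓ
    have h1 : fib ℓ = (Finset.univ.filter (fun p => p ∈ ℓ.1)).erase A := by
      ext p
      simp only [hfib_def, Finset.mem_filter, Finset.mem_univ, true_and, Finset.mem_erase]
      tauto
    have h2 : (Finset.univ.filter (fun p => p ∈ ℓ.1)).card = q + 1 := by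
      have := Configuration.ProjectivePlane.pointCount_eq P ℓ.1
      rw [horder] at this
      rw [← this, Configuration.pointCount, Nat.card_eq_fintype_card, Fintype.card_subtype]
    rw [h1, Finset.card_erase_of_mem (by simp [ℓ.2]), h2]
    omega
  have hιcard : Fintype.card ι = q + 1 := by
    have := Configuration.ProjectivePlane.lineCount_eq L A
    rw [horder] at this
    rw [← this, Configuration.lineCount, Nat.card_eq_fintype_card]
  -- secant count rewriting
  have hsecant : ∀ K : Finset P, A ∉ K →
      secantCount L (↑K : Set P) A = ∑ ℓ : ι, ((K ∩ fib ℓ).card).choose 2 := by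
    intro K hA
    have hinner : ∀ ℓ : L, ({p ∈ (↑K : Set P) | p ∈ ℓ}.ncard) =
        (K.filter (fun p => p ∈ ℓ)).card := by
      intro ℓ
      rw [← Set.ncard_coe_finset]
      congr 1
      ext p
      simp
    have hinter : ∀ ℓ : ι, K.filter (fun p => p ∈ ℓ.1) = K ∩ fib ℓ := by
      intro ℓ
      ext p
      simp only [Finset.mem_filter, Finset.mem_inter, hmemfib]
      constructor
      · intro ⟨h1, h2⟩
        exact ⟨h1, h2, fun h => hA (h ▸ h1)⟩
      · tauto
    unfold secantCount
    calc ∑ ℓ : L, (if A ∈ ℓ then ({p ∈ (↑K : Set P) | p ∈ ℓ}.ncard).choose 2 else 0)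
        = ∑ ℓ : L, (if A ∈ ℓ then ((K.filter (fun p => p ∈ ℓ)).card).choose 2 else 0) := by
          refine Finset.sum_congr rfl fun ℓ _ => ?_
          rw [hinner ℓ]
      _ = ∑ ℓ ∈ Finset.univ.filter (fun ℓ : L => A ∈ ℓ),
            ((K.filter (fun p => p ∈ ℓ)).card).choose 2 := by
          rw [Finset.sum_filter]
      _ = ∑ ℓ : ι, ((K.filter (fun p => p ∈ ℓ.1)).card).choose 2 := by
          exact Finset.sum_subtype (Finset.univ.filter (fun ℓ : L => A ∈ ℓ))
            (fun ℓ => by simp) (fun ℓ : L => ((K.filter (fun p => p ∈ ℓ)).card).choose 2)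
      _ = ∑ ℓ : ι, ((K ∩ fib ℓ).card).choose 2 := by
          refine Finset.sum_congr rfl fun ℓ _ => ?_
          rw [hinter ℓ]
  have hcover : ∀ K : Finset P, A ∉ K →
      Finset.univ.biUnion (fun ℓ : ι => K ∩ fib ℓ) = K := by
    intro K hA
    ext p
    simp only [Finset.mem_biUnion, Finset.mem_univ, true_and, Finset.mem_inter]
    constructor
    · rintro ⟨ℓ, h, -⟩
      exact h
    · intro hp
      obtain ⟨ℓ, hℓ, -⟩ := hexu p (fun h => hA (h ▸ hp))
      exact ⟨ℓ, hp, hℓ⟩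
  have hrec : ∀ f : ι → Finset P, (∀ ℓ, f ℓ ⊆ fib ℓ) →
      ∀ ℓ : ι, (Finset.univ.biUnion f) ∩ fib ℓ = f ℓ := by
    intro f hf ℓ
    ext p
    simp only [Finset.mem_inter, Finset.mem_biUnion, Finset.mem_univ, true_and]
    constructor
    · rintro ⟨⟨ℓ', hℓ'⟩, hp⟩
      rcases eq_or_ne ℓ' ℓ with rfl | hne
      · exact hℓ'
      · exact absurd hp (Finset.disjoint_left.mp (hdisj ℓ' ℓ hne) (hf ℓ' hℓ'))
    · intro hp
      exact ⟨⟨ℓ, hp⟩, hf ℓ hp⟩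
  have hcardsum : ∀ K : Finset P, A ∉ K → ∑ ℓ : ι, (K ∩ fib ℓ).card = K.card := by
    intro K hA
    rw [← hcover K hA, Finset.card_biUnion]
    · rw [hcover K hA]
    · intro ℓ _ ℓ' _ hne
      exact Finset.disjoint_of_subset_left Finset.inter_subset_right
        (Finset.disjoint_of_subset_right Finset.inter_subset_right (hdisj ℓ ℓ' hne))
  rw [← count_main q w hq hw fib hfibcard hιcard]
  refine Finset.card_bij' (fun K _ => fun ℓ : ι => K ∩ fib ℓ)
    (fun f _ => Finset.univ.biUnion f) ?_ ?_ ?_ ?_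
  · -- maps into GF
    intro K hK
    simp only [Finset.mem_filter, Finset.mem_univ, true_and] at hK
    obtain ⟨hcard, hA, hsec⟩ := hK
    rw [Finset.mem_filter]
    refine ⟨?_, ?_, ?_⟩
    · rw [Fintype.mem_piFinset]
      intro ℓ
      rw [Finset.mem_powerset]
      exact Finset.inter_subset_right
    · rw [hcardsum K hA, hcard]
    · rw [← hsecant K hA, hsec]
  · -- inverse maps into the K-set
    intro f hf
    obtain ⟨hmem, hsum, hch⟩ := Finset.mem_filter.mp hf
    rw [Fintype.mem_piFinset] at hmem
    simp only [Finset.mem_powerset] at hmem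
    have hA : A ∉ Finset.univ.biUnion f := by
      rw [Finset.mem_biUnion]
      rintro ⟨ℓ, -, hAf⟩
      exact ((hmemfib A ℓ).mp (hmem ℓ hAf)).2 rfl
    simp only [Finset.mem_filter, Finset.mem_univ, true_and]
    refine ⟨?_, hA, ?_⟩
    · have hd' : ∀ ℓ ∈ Finset.univ, ∀ ℓ' ∈ Finset.univ, ℓ ≠ ℓ' →
          Disjoint (f ℓ) (f ℓ') := fun ℓ _ ℓ' _ hne =>
        Finset.disjoint_of_subset_left (hmem ℓ)
          (Finset.disjoint_of_subset_right (hmem ℓ') (hdisj ℓ ℓ' hne))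
      rw [Finset.card_biUnion hd']
      exact hsum
    · rw [hsecant _ hA]
      rw [Finset.sum_congr rfl (fun ℓ _ => by rw [hrec f hmem ℓ])]
      exact hch
  · -- left inverse
    intro K hK
    simp only [Finset.mem_filter, Finset.mem_univ, true_and] at hK
    exact hcover K hK.2.1
  · -- right inverse
    intro f hf
    obtain ⟨hmem, -, -⟩ := Finset.mem_filter.mp hf
    rw [Fintype.mem_piFinset] at hmem
    simp only [Finset.mem_powerset] at hmem
    funext ℓ
    exact hrec f hmem ℓ
end
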